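/- arXiv:2211.08941 — 13 statements merged into one kernel-verified Lean document; each statement's English description precedes it below -/
import Mathlib

section
/- Let k ≥ 2 and q ≥ 3 be integers. Then F^{(k)}_{q,n} = U_{q,n} for all integers n with 1 ≤ n ≤ k+1. -/
/-- For integers `k ≥ 2` and `q ≥ 3`, `F n = U n` for all `1 ≤ n ≤ k+1`. -/
theorem qk_fib_eq_U_initial
    (q : ℤ) (k : ℕ) (hq : 3 ≤ q) (hk : 2 ≤ k)
    (F : ℤ → ℝ)
    (hF0 : ∀ n : ℤ, 2 - (k : ℤ) ≤ n → n ≤ 0 → F n = 0)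
    (hF1 : F 1 = 1)
    (hFrec : ∀ n : ℤ, 2 ≤ n →
      F n = (q : ℝ) * F (n - 1) + ∑ i ∈ Finset.Icc 2 k, F (n - (i : ℤ)))
    (U : ℤ → ℝ)
    (hU1 : U 1 = 1)
    (hU2 : U 2 = (q : ℝ))
    (hUrec : ∀ n : ℤ, 3 ≤ n → U n = ((q : ℝ) + 1) * U (n - 1) - ((q : ℝ) - 1) * U (n - 2)) :
    ∀ n : ℤ, 1 ≤ n → n ≤ (k : ℤ) + 1 → F n = U n := by
  -- key: for 2 ≤ m ≤ k+1, F m = q * F (m-1) + ∑_{j=1}^{m-2} F j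
  have key : ∀ m : ℕ, 2 ≤ m → m ≤ k + 1 →
      F m = (q : ℝ) * F ((m : ℤ) - 1) + ∑ j ∈ Finset.Icc 1 (m - 2), F (j : ℤ) := by
    intro m hm2 hmk
    rw [hFrec m (by exact_mod_cast hm2)]
    congr 1
    have h1 : ∑ i ∈ Finset.Icc 2 k, F ((m : ℤ) - (i : ℤ))
        = ∑ i ∈ Finset.Icc 2 (m - 1), F ((m : ℤ) - (i : ℤ)) := by
      refine (Finset.sum_subset ?_ ?_).symm
      · intro i hi
        simp only [Finset.mem_Icc] at hi ⊢
        omega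
      · intro i hi hni
        simp only [Finset.mem_Icc] at hi hni
        apply hF0 <;> push_cast <;> omega
    rw [h1]
    refine Finset.sum_nbij' (fun i => m - i) (fun j => m - j) ?_ ?_ ?_ ?_ ?_
    · intro a ha; simp only [Finset.mem_Icc] at ha ⊢; omega
    · intro a ha; simp only [Finset.mem_Icc] at ha ⊢; omega
    · intro a ha; simp only [Finset.mem_Icc] at ha; omega
    · intro a ha; simp only [Finset.mem_Icc] at ha; omega
    · intro i hi
      simp only [Finset.mem_Icc] at hi
      congr 1
      push_cast [Nat.cast_sub (by omega : i ≤ m)]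
      ring
  -- three-term recurrence for F
  have three : ∀ m : ℕ, 3 ≤ m → m ≤ k + 1 →
      F m = ((q : ℝ) + 1) * F ((m : ℤ) - 1) - ((q : ℝ) - 1) * F ((m : ℤ) - 2) := by
    intro m hm3 hmk
    have h1 := key m (by omega) hmk
    have h2 := key (m - 1) (by omega) (by omega)
    have hc1 : ((m - 1 : ℕ) : ℤ) = (m : ℤ) - 1 := by push_cast [Nat.cast_sub (by omega : 1 ≤ m)]; ring
    have hc2 : ((m - 2 : ℕ) : ℤ) = (m : ℤ) - 2 := by push_cast [Nat.cast_sub (by omega : 2 ≤ m)]; ring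
    rw [hc1] at h2
    have hc3 : ((m : ℤ) - 1) - 1 = (m : ℤ) - 2 := by ring
    rw [hc3] at h2
    have hsplit : ∑ j ∈ Finset.Icc 1 (m - 2), F (j : ℤ)
        = (∑ j ∈ Finset.Icc 1 (m - 1 - 2), F (j : ℤ)) + F ((m : ℤ) - 2) := by
      have hms : m - 2 = (m - 1 - 2) + 1 := by omega
      rw [hms, Finset.sum_Icc_succ_top (by omega)]
      congr 1
      rw [show m - 1 - 2 + 1 = m - 2 from by omega, hc2]
    rw [hsplit] at h1
    linarith [h1, h2]
  -- F m = U m for 1 ≤ m ≤ k+1 (natural m), by strong induction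
  have main : ∀ m : ℕ, 1 ≤ m → m ≤ k + 1 → F m = U m := by
    intro m
    induction m using Nat.strong_induction_on with
    | _ m ih =>
      intro hm1 hmk
      match m, hm1 with
      | 1, _ => simpa using hF1.trans hU1.symm
      | 2, _ =>
        have h2 := key 2 le_rfl (by omega)
        norm_num at h2 ⊢
        rw [h2, hF1, hU2]; ring
      | (n + 3), _ =>
        have h3 : 3 ≤ n + 3 := by omega
        have hth := three (n + 3) h3 hmk
        have hu := hUrec ((n + 3 : ℕ) : ℤ) (by exact_mod_cast h3)
        have e1 : ((n + 3 : ℕ) : ℤ) - 1 = ((n + 2 : ℕ) : ℤ) := by push_cast; ring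
        have e2 : ((n + 3 : ℕ) : ℤ) - 2 = ((n + 1 : ℕ) : ℤ) := by push_cast; ring
        rw [e1, e2] at hth hu
        rw [hth, hu, ih (n + 2) (by omega) (by omega) (by omega),
          ih (n + 1) (by omega) (by omega) (by omega)]
  intro n hn1 hnk
  lift n to ℕ using (by omega)
  exact main n (by exact_mod_cast hn1) (by exact_mod_cast hnk)
end

section
/- Let k ≥ 2 and q ≥ 3 be integers. Then for all integers n ≥ k+2, F^{(k)}_{q,n} = U_{q,n} − Σ_{j=1}^{n−k−1} V_{q,j}·F^{(k)}_{q,n−k−j}. -/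
/-!
Subtracting the recurrence of `F` at `n - 1` from the one at `n` telescopes the sum and gives
`F n = (q+1) F (n-1) - (q-1) F (n-2) - F (n-k-1)` for `n ≥ 3`. Since `V` is the impulse response
of `Y n = (q+1) Y (n-1) - (q-1) Y (n-2)`, the convolution `S n = ∑_{j=1}^{n-k-1} V j F (n-k-j)`
satisfies this recurrence with forcing term `F (n-k-1)`. Hence `F - U + S` satisfies the
homogeneous recurrence for `n ≥ 3` and vanishes at `n = 1, 2`, so it vanishes for all `n ≥ 1`.
-/

open Finset

lemma sum_Icc_add' {α M : Type*} [AddCommMonoid M] [AddCommMonoid α] [PartialOrder α]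
    [IsOrderedCancelAddMonoid α] [ExistsAddOfLE α] [LocallyFiniteOrder α]
    (f : α → M) (a b c : α) : ∑ x ∈ Icc a b, f (x + c) = ∑ x ∈ Icc (a + c) (b + c), f x := by
  rw [← map_add_right_Icc, sum_map]
  rfl

lemma sum_Icc_eq_add_sum_Icc_add_one {M : Type*} [AddCommMonoid M] {f : ℤ → M} {a b : ℤ}
    (h : a ≤ b) : ∑ j ∈ Icc a b, f j = f a + ∑ j ∈ Icc (a + 1) b, f j := by
  rw [Icc_add_one_left_eq_Ioc, add_sum_Ioc_eq_sum_Icc h]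

/-- `posConv V X N = ∑_{i + j = N, i, j ≥ 1} V i * X j`; the sum in the theorem is
`posConv V F (n - k)`. -/
noncomputable def posConv (V X : ℤ → ℝ) (N : ℤ) : ℝ :=
  ∑ j ∈ Icc 1 (N - 1), V j * X (N - j)

section posConv

variable {V X : ℤ → ℝ}

lemma posConv_of_le_one {N : ℤ} (hN : N ≤ 1) : posConv V X N = 0 := by
  rw [posConv, Icc_eq_empty (by omega), sum_empty]

lemma posConv_rec {a b : ℝ} (hV1 : V 1 = 1) (hV2 : V 2 = a)
    (hVrec : ∀ n : ℤ, 3 ≤ n → V n = a * V (n - 1) - b * V (n - 2)) {N : ℤ} (hN : 2 ≤ N) :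
    posConv V X N = a * posConv V X (N - 1) - b * posConv V X (N - 2) + X (N - 1) := by
  obtain rfl | hN := hN.eq_or_lt
  · simp [posConv, hV1]
  have hfirst : posConv V X N = X (N - 1) + a * X (N - 2)
      + ∑ j ∈ Icc 3 (N - 1), V j * X (N - j) := by
    rw [posConv, sum_Icc_eq_add_sum_Icc_add_one (by omega), show (1 : ℤ) + 1 = 2 by norm_num,
      sum_Icc_eq_add_sum_Icc_add_one (by omega), show (2 : ℤ) + 1 = 3 by norm_num, hV1, hV2]
    ring
  have hprev : posConv V X (N - 1) = X (N - 2) + ∑ j ∈ Icc 3 (N - 1), V (j - 1) * X (N - j) := by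
    rw [posConv, sum_Icc_eq_add_sum_Icc_add_one (by omega), hV1, show (3 : ℤ) = 2 + 1 from rfl,
      show N - 1 = N - 1 - 1 + 1 by ring, ← sum_Icc_add']
    ring_nf
  have hprev2 : posConv V X (N - 2) = ∑ j ∈ Icc 3 (N - 1), V (j - 2) * X (N - j) := by
    rw [posConv, show (3 : ℤ) = 1 + 2 from rfl, show N - 1 = N - 2 - 1 + 2 by ring,
      ← sum_Icc_add']
    ring_nf
  have hmid : ∑ j ∈ Icc 3 (N - 1), V j * X (N - j)
      = ∑ j ∈ Icc 3 (N - 1), (a * (V (j - 1) * X (N - j)) - b * (V (j - 2) * X (N - j))) :=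
    sum_congr rfl fun j hj => by rw [hVrec j (mem_Icc.1 hj).1]; ring
  rw [hfirst, hprev, hprev2, hmid, sum_sub_distrib, ← mul_sum, ← mul_sum]
  ring

end posConv

lemma three_term_rec_of_fib_rec {F : ℤ → ℝ} {c : ℝ} {k : ℕ} (hk : 2 ≤ k)
    (hrec : ∀ n : ℤ, 2 ≤ n → F n = c * F (n - 1) + ∑ i ∈ Icc 2 k, F (n - (i : ℤ)))
    {n : ℤ} (hn : 3 ≤ n) :
    F n = (c + 1) * F (n - 1) - (c - 1) * F (n - 2) - F (n - k - 1) := by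
  have htel : ∑ i ∈ Icc 2 k, (F (n - i - 1) - F (n - i)) = F (n - k - 1) - F (n - 2) := by
    simpa only [Nat.cast_add, Nat.cast_one, Nat.cast_ofNat, sub_add_eq_sub_sub]
      using sum_Icc_sub hk fun i : ℕ => F (n - i)
  have h₁ := hrec n (by omega)
  have h₂ := hrec (n - 1) (by omega)
  rw [show n - 1 - 1 = n - 2 by ring] at h₂
  simp only [sub_right_comm n 1] at h₂
  rw [← sub_add_cancel (∑ i ∈ Icc 2 k, F (n - i - 1)) (∑ i ∈ Icc 2 k, F (n - i)), ← sum_sub_distrib,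
    htel] at h₂
  linear_combination h₁ - h₂

lemma eq_zero_of_two_term_rec {D : ℤ → ℝ} {a b : ℝ} {n₀ : ℤ} (h₀ : D n₀ = 0)
    (h₁ : D (n₀ + 1) = 0) (hrec : ∀ n : ℤ, n₀ + 2 ≤ n → D n = a * D (n - 1) - b * D (n - 2))
    {n : ℤ} (hn : n₀ ≤ n) : D n = 0 := by
  suffices D n = 0 ∧ D (n + 1) = 0 from this.1
  induction n, hn using Int.leInduction with
  | base => exact ⟨h₀, h₁⟩
  | succ m hm ih =>
    refine ⟨ih.2, ?_⟩
    rw [hrec (m + 1 + 1) (by omega), add_sub_cancel_right, show m + 1 + 1 - 2 = m by ring, ih.1,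
      ih.2]
    ring

theorem qk_fib_eq_U_sub_sum_general
    (q : ℤ) (k : ℕ) (hk : 2 ≤ k)
    (F : ℤ → ℝ)
    (hF0 : ∀ n : ℤ, 2 - (k : ℤ) ≤ n → n ≤ 0 → F n = 0)
    (hF1 : F 1 = 1)
    (hFrec : ∀ n : ℤ, 2 ≤ n →
      F n = (q : ℝ) * F (n - 1) + ∑ i ∈ Finset.Icc 2 k, F (n - (i : ℤ)))
    (U : ℤ → ℝ)
    (hU1 : U 1 = 1)
    (hU2 : U 2 = (q : ℝ))
    (hUrec : ∀ n : ℤ, 3 ≤ n → U n = ((q : ℝ) + 1) * U (n - 1) - ((q : ℝ) - 1) * U (n - 2))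
    (V : ℤ → ℝ)
    (hV1 : V 1 = 1)
    (hV2 : V 2 = (q : ℝ) + 1)
    (hVrec : ∀ n : ℤ, 3 ≤ n → V n = ((q : ℝ) + 1) * V (n - 1) - ((q : ℝ) - 1) * V (n - 2)) :
    ∀ n : ℤ, (k : ℤ) + 2 ≤ n →
      F n = U n - ∑ j ∈ Finset.Icc (1 : ℤ) (n - (k : ℤ) - 1), V j * F (n - (k : ℤ) - j) := by
  have hF2 : F 2 = q := by
    rw [hFrec 2 le_rfl, sum_eq_zero fun i hi => hF0 _ (by grind) (by grind)]
    norm_num [hF1]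
  have hconv : ∀ n : ℤ, 3 ≤ n → posConv V F (n - k) = (q + 1) * posConv V F (n - 1 - k)
      - (q - 1) * posConv V F (n - 2 - k) + F (n - k - 1) := by
    intro n hn
    rcases le_or_gt 2 (n - k) with h | h
    · rw [posConv_rec hV1 hV2 hVrec h, sub_right_comm n 1, sub_right_comm n 2, sub_sub n]
    · rw [posConv_of_le_one (by omega), posConv_of_le_one (by omega), posConv_of_le_one (by omega),
        hF0 _ (by omega) (by omega)]
      ring
  have hD : ∀ n : ℤ, 1 ≤ n → F n - U n + posConv V F (n - k) = 0 := by
    refine fun n hn => eq_zero_of_two_term_rec (D := fun n => F n - U n + posConv V F (n - k))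
      (a := q + 1) (b := q - 1) ?_ ?_ (fun m hm => ?_) hn
    · rw [hF1, hU1, posConv_of_le_one (by omega)]; ring
    · rw [show (1 : ℤ) + 1 = 2 by norm_num, hF2, hU2, posConv_of_le_one (by omega)]; ring
    · rw [three_term_rec_of_fib_rec hk hFrec (by omega), hUrec m (by omega), hconv m (by omega)]
      ring
  intro n hn
  linear_combination (norm := skip) hD n (by omega)
  rw [posConv]
  ring

/-- For integers `k ≥ 2` and `q ≥ 3` and all integers `n ≥ k+2`,
`F n = U n − ∑_{j=1}^{n-k-1} V j · F (n-k-j)`. -/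
theorem qk_fib_eq_U_sub_sum
    (q : ℤ) (k : ℕ) (hq : 3 ≤ q) (hk : 2 ≤ k)
    (F : ℤ → ℝ)
    (hF0 : ∀ n : ℤ, 2 - (k : ℤ) ≤ n → n ≤ 0 → F n = 0)
    (hF1 : F 1 = 1)
    (hFrec : ∀ n : ℤ, 2 ≤ n →
      F n = (q : ℝ) * F (n - 1) + ∑ i ∈ Finset.Icc 2 k, F (n - (i : ℤ)))
    (U : ℤ → ℝ)
    (hU1 : U 1 = 1)
    (hU2 : U 2 = (q : ℝ))
    (hUrec : ∀ n : ℤ, 3 ≤ n → U n = ((q : ℝ) + 1) * U (n - 1) - ((q : ℝ) - 1) * U (n - 2))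
    (V : ℤ → ℝ)
    (hV1 : V 1 = 1)
    (hV2 : V 2 = (q : ℝ) + 1)
    (hVrec : ∀ n : ℤ, 3 ≤ n → V n = ((q : ℝ) + 1) * V (n - 1) - ((q : ℝ) - 1) * V (n - 2)) :
    ∀ n : ℤ, (k : ℤ) + 2 ≤ n →
      F n = U n - ∑ j ∈ Finset.Icc (1 : ℤ) (n - (k : ℤ) - 1), V j * F (n - (k : ℤ) - j) :=
  qk_fib_eq_U_sub_sum_general q k hk F hF0 hF1 hFrec U hU1 hU2 hUrec V hV1 hV2 hVrec
end

section
/- Let k ≥ 2 and q ≥ 3 be integers. Then F^{(k)}_{q,n} ≤ U_{q,n} for all integers n ≥ 1. -/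
/-- For integers `k ≥ 2` and `q ≥ 3`, `F n ≤ U n` for all integers `n ≥ 1`. -/
theorem qk_fib_le_U
    (q : ℤ) (k : ℕ) (hq : 3 ≤ q) (hk : 2 ≤ k)
    (F : ℤ → ℝ)
    (hF0 : ∀ n : ℤ, 2 - (k : ℤ) ≤ n → n ≤ 0 → F n = 0)
    (hF1 : F 1 = 1)
    (hFrec : ∀ n : ℤ, 2 ≤ n →
      F n = (q : ℝ) * F (n - 1) + ∑ i ∈ Finset.Icc 2 k, F (n - (i : ℤ)))
    (U : ℤ → ℝ)
    (hU1 : U 1 = 1)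
    (hU2 : U 2 = (q : ℝ))
    (hUrec : ∀ n : ℤ, 3 ≤ n → U n = ((q : ℝ) + 1) * U (n - 1) - ((q : ℝ) - 1) * U (n - 2)) :
    ∀ n : ℤ, 1 ≤ n → F n ≤ U n := by
  have hq' : (3 : ℝ) ≤ (q : ℝ) := by exact_mod_cast hq
  -- F is nonneg on [2-k, ∞)
  have hFnonnegN : ∀ N : ℕ, ∀ m : ℤ, 2 - (k : ℤ) ≤ m → m < 2 - (k : ℤ) + N → 0 ≤ F m := by
    intro N
    induction N with
    | zero => intro m h1 h2; omega
    | succ N ih =>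
      intro m h1 h2
      rcases lt_or_ge m (2 - (k : ℤ) + N) with h | h
      · exact ih m h1 h
      by_cases hm0 : m ≤ 0
      · exact (hF0 m h1 hm0).ge
      rcases eq_or_lt_of_le (by omega : (1 : ℤ) ≤ m) with hm1 | hm2
      · rw [← hm1, hF1]; norm_num
      have hm2' : (2 : ℤ) ≤ m := hm2
      rw [hFrec m hm2']
      have t1 : 0 ≤ F (m - 1) := by
        apply ih <;> push_cast <;> omega
      have t2 : 0 ≤ ∑ i ∈ Finset.Icc 2 k, F (m - (i : ℤ)) := by
        apply Finset.sum_nonneg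
        intro i hi
        rw [Finset.mem_Icc] at hi
        apply ih <;> push_cast <;> omega
      have : (0:ℝ) ≤ (q:ℝ) := by linarith
      positivity
  have hFnn : ∀ m : ℤ, 2 - (k : ℤ) ≤ m → 0 ≤ F m := by
    intro m h1
    refine hFnonnegN (m - (2 - (k : ℤ)) + 1).toNat m h1 ?_
    have := Int.toNat_of_nonneg (by omega : (0:ℤ) ≤ m - (2 - (k : ℤ)) + 1)
    omega
  -- key three-term identity for F
  have hFkey : ∀ n : ℤ, 3 ≤ n →
      F n = ((q:ℝ) + 1) * F (n - 1) - ((q:ℝ) - 1) * F (n - 2) - F (n - 1 - k) := by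
    intro n hn
    have h1 := hFrec n (by linarith)
    have h2 := hFrec (n - 1) (by linarith)
    have e1 : n - 1 - 1 = n - 2 := by ring
    rw [e1] at h2
    have htel : (∑ i ∈ Finset.Icc 2 k, F (n - (i : ℤ)))
        - (∑ i ∈ Finset.Icc 2 k, F (n - 1 - (i : ℤ)))
        = F (n - 2) - F (n - 1 - k) := by
      rw [← Finset.sum_sub_distrib, ← Finset.Ico_add_one_right_eq_Icc, Finset.sum_Ico_eq_sum_range]
      have hrw : ∀ j ∈ Finset.range (k + 1 - 2),
          F (n - ((2 + j : ℕ) : ℤ)) - F (n - 1 - ((2 + j : ℕ) : ℤ))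
          = (fun j : ℕ => F (n - 2 - j)) j - (fun j : ℕ => F (n - 2 - j)) (j + 1) := by
        intro j _
        simp only
        congr 2 <;> push_cast <;> ring
      rw [Finset.sum_congr rfl hrw, Finset.sum_range_sub']
      congr 2 <;> push_cast <;> omega
    linarith
  -- main strengthened induction
  have key : ∀ n : ℤ, 1 ≤ n →
      0 ≤ U n - F n ∧ ((q:ℝ) - 1) * (U n - F n) ≤ U (n + 1) - F (n + 1) := by
    refine Int.le_induction ?_ ?_
    ·
      have hF2 : F 2 = (q : ℝ) := by
        rw [hFrec 2 le_rfl]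
        have : (∑ i ∈ Finset.Icc 2 k, F (2 - (i : ℤ))) = 0 := by
          apply Finset.sum_eq_zero
          intro i hi
          rw [Finset.mem_Icc] at hi
          apply hF0 <;> push_cast <;> omega
        rw [this]
        norm_num [hF1]
      norm_num [hU1, hF1, hU2, hF2]
    · intro n hn ih
      obtain ⟨h0, h1⟩ := ih
      have hDn1 : 0 ≤ U (n + 1) - F (n + 1) := by
        nlinarith
      refine ⟨hDn1, ?_⟩
      have hU' := hUrec (n + 2) (by linarith)
      have hF' := hFkey (n + 2) (by linarith)
      have e1 : n + 2 - 1 = n + 1 := by ring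
      have e2 : n + 2 - 2 = n := by ring
      rw [e1, e2] at hU' hF'
      have e3 : n + 1 + 1 = n + 2 := by ring
      rw [e3]
      have hFk : 0 ≤ F (n + 1 - k) := hFnn _ (by omega)
      nlinarith
  intro n hn
  linarith [(key n hn).1]
end

section
/- Let k ≥ 2 and q ≥ 3 be integers, and suppose γ_1, γ_2, …, γ_k ∈ ℂ are pairwise distinct complex numbers which are exactly the roots of the characteristic polynomial Φ_{q,k}(t) = t^k − q t^{k−1} − t^{k−2} − ⋯ − t − 1. Then for all integers n ≥ −(k−2), F^{(k)}_{q,n} = Σ_{i=1}^k g_{q,k}(γ_i)·γ_i^n, where g_{q,k}(x) = (x−1)/((k+1)x² − (q+1)kx + (q−1)(k−1)). -/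
open Polynomial Finset

lemma basis_eq_C_nodalWeight_mul_nodal {F : Type*} [Field F] {ι : Type*} [DecidableEq ι]
    (s : Finset ι) (v : ι → F) (i : ι) :
    Lagrange.basis s v i = C (Lagrange.nodalWeight s v i) * Lagrange.nodal (s.erase i) v := by
  rw [Lagrange.basis, Lagrange.nodalWeight, Lagrange.nodal]
  simp_rw [Lagrange.basisDivisor]
  rw [prod_mul_distrib, map_prod]

lemma coeff_basis_pred {F : Type*} [Field F] {ι : Type*} [DecidableEq ι]
    (s : Finset ι) (v : ι → F) (i : ι) (hi : i ∈ s) :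
    (Lagrange.basis s v i).coeff (s.card - 1) = Lagrange.nodalWeight s v i := by
  rw [basis_eq_C_nodalWeight_mul_nodal, coeff_C_mul]
  have h1 : (Lagrange.nodal (s.erase i) v).natDegree = s.card - 1 := by
    rw [Lagrange.natDegree_nodal, card_erase_of_mem hi]
  rw [← h1, Lagrange.nodal_monic.coeff_natDegree, mul_one]

lemma sum_nodalWeight_pow {F : Type*} [Field F] {ι : Type*} [DecidableEq ι]
    (s : Finset ι) (v : ι → F) (hvs : Set.InjOn v s) (m : ℕ) (hm : m < s.card) :
    ∑ i ∈ s, Lagrange.nodalWeight s v i * v i ^ m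
      = if m = s.card - 1 then 1 else 0 := by
  have hX : (X ^ m : F[X]) = Lagrange.interpolate s v (fun i => v i ^ m) := by
    refine Lagrange.eq_interpolate_of_eval_eq _ hvs ?_ ?_
    · rw [degree_X_pow]; exact_mod_cast hm
    · intro i _; simp
  have := congrArg (fun p : F[X] => p.coeff (s.card - 1)) hX
  simp only [coeff_X_pow, Lagrange.interpolate_apply, finset_sum_coeff, coeff_C_mul] at this
  rw [show ((if #s - 1 = m then (1:F) else 0) = if m = #s - 1 then 1 else 0) by
    by_cases h : m = #s - 1 <;> simp [h, eq_comm]] at this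
  refine (Finset.sum_congr rfl fun i hi => ?_).trans this.symm
  rw [coeff_basis_pred _ _ _ hi, mul_comm]

/-- Binet-style formula: if `γ 1, …, γ k` are pairwise distinct complex
numbers which are exactly the roots of `Φ_{q,k}(t) = t^k − q·t^{k-1} − t^{k-2} − ⋯ − t − 1`,
then `F n = Σ_{i=1}^k g(γ i) · (γ i)^n` for all integers `n ≥ −(k−2)`, where
`g(x) = (x−1)/((k+1)x² − (q+1)k·x + (q−1)(k−1))`. -/
theorem qk_fib_binet_formula
    (q : ℤ) (k : ℕ) (hq : 3 ≤ q) (hk : 2 ≤ k)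
    (F : ℤ → ℝ)
    (hF0 : ∀ n : ℤ, 2 - (k : ℤ) ≤ n → n ≤ 0 → F n = 0)
    (hF1 : F 1 = 1)
    (hFrec : ∀ n : ℤ, 2 ≤ n →
      F n = (q : ℝ) * F (n - 1) + ∑ i ∈ Finset.Icc 2 k, F (n - (i : ℤ)))
    (γ : Fin k → ℂ)
    (hγinj : Function.Injective γ)
    (hγroots : ∀ z : ℂ,
      z ^ k - (q : ℂ) * z ^ (k - 1) - ∑ i ∈ Finset.range (k - 1), z ^ i = 0 ↔
        ∃ i : Fin k, γ i = z) :
    ∀ n : ℤ, 2 - (k : ℤ) ≤ n →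
      (F n : ℂ) = ∑ i : Fin k,
        ((γ i - 1) /
            (((k : ℂ) + 1) * (γ i) ^ 2 - ((q : ℂ) + 1) * (k : ℂ) * γ i +
              ((q : ℂ) - 1) * ((k : ℂ) - 1))) * (γ i) ^ n := by
  classical
  obtain ⟨K, rfl⟩ : ∃ K, k = K + 2 := ⟨k - 2, by omega⟩
  set Q : ℂ[X] := X ^ (K+2) - C (q:ℂ) * X ^ (K+1) - ∑ j ∈ range (K+1), X ^ j with hQdef
  have hQeval : ∀ z : ℂ, Q.eval z
      = z ^ (K+2) - (q:ℂ) * z ^ (K+1) - ∑ j ∈ range (K+1), z ^ j := by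
    intro z; simp [hQdef, eval_finset_sum]
  have hroot : ∀ i, Q.eval (γ i) = 0 := by
    intro i
    have := (hγroots (γ i)).mpr ⟨i, rfl⟩
    rw [hQeval]
    simpa using this
  -- degree and monicity of Q
  have hp : (C (q:ℂ) * X ^ (K+1) + ∑ j ∈ range (K+1), (X:ℂ[X]) ^ j).degree
      ≤ ((K+1 : ℕ) : WithBot ℕ) := by
    refine (degree_add_le _ _).trans (max_le (degree_C_mul_X_pow_le _ _) ?_)
    refine (degree_sum_le _ _).trans ?_
    refine Finset.sup_le fun j hj => ?_
    rw [degree_X_pow]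
    exact_mod_cast Nat.le_of_lt_succ (mem_range.mp hj) |>.trans (Nat.le_succ K)
  have hQ2 : Q = X ^ (K+2) - (C (q:ℂ) * X ^ (K+1) + ∑ j ∈ range (K+1), X ^ j) := by
    rw [hQdef]; ring
  have hQmonic : Q.Monic := by
    rw [hQ2]
    exact monic_X_pow_sub (lt_of_le_of_lt hp (by exact_mod_cast Nat.lt_succ_self (K+1)))
  have hQdeg : Q.degree = ((K+2 : ℕ) : WithBot ℕ) := by
    rw [hQ2, ← degree_X_pow (R := ℂ) (K+2)]
    refine degree_sub_eq_left_of_degree_lt ?_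
    rw [degree_X_pow]
    exact lt_of_le_of_lt hp (by exact_mod_cast Nat.lt_succ_self (K+1))
  have hvs : Set.InjOn γ (Finset.univ : Finset (Fin (K+2))) := fun a _ b _ h => hγinj h
  have hN : Lagrange.nodal Finset.univ γ = Q := by
    refine (Polynomial.eq_of_degree_le_of_eval_index_eq Finset.univ hvs ?_ ?_ ?_ ?_).symm
    · rw [hQdeg]; simp
    · rw [hQdeg, Lagrange.degree_nodal]; simp
    · rw [hQmonic.leadingCoeff, Lagrange.nodal_monic.leadingCoeff]
    · intro i _
      rw [hroot i, Lagrange.eval_nodal_at_node (mem_univ i)]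
  set E : Fin (K+2) → ℂ := fun i => eval (γ i) (derivative Q) with hEdef
  have hE : ∀ i, E i = eval (γ i) (Lagrange.nodal ((Finset.univ).erase i) γ) := by
    intro i
    simp only [hEdef, ← hN]
    exact Lagrange.eval_nodal_derivative_eval_node_eq (mem_univ i)
  have hEne : ∀ i, E i ≠ 0 := by
    intro i
    rw [hE i]
    refine Lagrange.eval_nodal_not_at_node fun j hj => ?_
    exact fun h => (mem_erase.mp hj).1 (hγinj h).symm
  have hw : ∀ i, Lagrange.nodalWeight Finset.univ γ i = (E i)⁻¹ := by
    intro i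
    rw [Lagrange.nodalWeight_eq_eval_nodal_erase_inv, hE i]
  -- the (X-1)*Q identity
  have hPsi : (X - C 1) * Q
      = X ^ (K+3) - C ((q:ℂ)+1) * X ^ (K+2) + C ((q:ℂ)-1) * X ^ (K+1) + 1 := by
    have hg : (∑ j ∈ range (K+1), (X:ℂ[X]) ^ j) * (X - 1) = X ^ (K+1) - 1 :=
      geom_sum_mul X (K+1)
    rw [hQdef]
    simp only [C_add, C_sub, C_1]
    ring_nf
    ring_nf at hg
    linear_combination (-1 : ℂ[X]) * hg
  have hγne0 : ∀ i, γ i ≠ 0 := by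
    intro i h
    have := hroot i
    rw [h, hQeval] at this
    simp [zero_pow_eq, Finset.sum_ite_eq'] at this
  have hγne1 : ∀ i, γ i ≠ 1 := by
    intro i h
    have := hroot i
    rw [h, hQeval] at this
    simp at this
    have h2 : ((1 - q - (K+1 : ℕ) : ℤ) : ℂ) = 0 := by push_cast; push_cast at this; linear_combination this
    have h3 : (1 - q - (K+1 : ℕ) : ℤ) = 0 := by exact_mod_cast h2
    omega
  -- key identity linking E and the denominator
  have key : ∀ i, (γ i - 1) * E i
      = γ i ^ K * ((((K:ℂ)+2) + 1) * (γ i) ^ 2 - ((q:ℂ)+1) * ((K:ℂ)+2) * γ i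
          + ((q:ℂ)-1) * (((K:ℂ)+2) - 1)) := by
    intro i
    have h2 := congrArg (fun p : ℂ[X] => eval (γ i) (derivative p)) hPsi
    simp only [derivative_mul, derivative_sub, derivative_add, derivative_X_pow, derivative_one,
      derivative_X, derivative_C, eval_add, eval_sub, eval_mul, eval_pow, eval_X, eval_C,
      eval_one, eval_natCast, zero_mul, mul_zero, add_zero, zero_add, one_mul,
      hroot i] at h2
    have hK3 : K + 3 - 1 = K + 2 := rfl
    have hK2 : K + 2 - 1 = K + 1 := rfl
    have hK1 : K + 1 - 1 = K := rfl
    rw [hK3, hK2, hK1] at h2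
    push_cast at h2 ⊢
    ring_nf at h2 ⊢
    linear_combination h2
  have hDne : ∀ i, (((K:ℂ)+2) + 1) * (γ i) ^ 2 - ((q:ℂ)+1) * ((K:ℂ)+2) * γ i
      + ((q:ℂ)-1) * (((K:ℂ)+2) - 1) ≠ 0 := by
    intro i hD
    have h1 : (γ i - 1) * E i = 0 := by rw [key i, hD, mul_zero]
    rcases mul_eq_zero.mp h1 with h | h
    · exact hγne1 i (by linear_combination h)
    · exact hEne i h
  -- per-term identity
  have hterm : ∀ (i : Fin (K+2)) (n : ℤ),
      ((γ i - 1) / ((((K:ℂ)+2) + 1) * (γ i) ^ 2 - ((q:ℂ)+1) * ((K:ℂ)+2) * γ i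
        + ((q:ℂ)-1) * (((K:ℂ)+2) - 1))) * γ i ^ n
      = (E i)⁻¹ * γ i ^ (n + K) := by
    intro i n
    have h3 : (γ i - 1) / ((((K:ℂ)+2) + 1) * (γ i) ^ 2 - ((q:ℂ)+1) * ((K:ℂ)+2) * γ i
        + ((q:ℂ)-1) * (((K:ℂ)+2) - 1)) = γ i ^ (K:ℕ) / E i := by
      rw [div_eq_div_iff (hDne i) (hEne i)]
      linear_combination key i
    rw [h3, show (n + (K:ℤ)) = n + (K:ℕ) by push_cast; ring,
      zpow_add₀ (hγne0 i) n (K:ℤ), zpow_natCast]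
    field_simp
  -- the Binet sequence
  set e : ℤ → ℂ := fun n => ∑ i : Fin (K+2), (E i)⁻¹ * γ i ^ (n + K) with hedef
  have hcard : (Finset.univ : Finset (Fin (K+2))).card = K + 2 := by simp
  have heinit : ∀ n : ℤ, 2 - ((K:ℤ)+2) ≤ n → n ≤ 1 →
      e n = if n = 1 then 1 else 0 := by
    intro n h1 h2
    have hm : ∃ m : ℕ, (m : ℤ) = n + K ∧ m < K + 2 := by
      refine ⟨(n + K).toNat, ?_, ?_⟩ <;> omega
    obtain ⟨m, hm1, hm2⟩ := hm
    have : e n = ∑ i : Fin (K+2), Lagrange.nodalWeight Finset.univ γ i * γ i ^ m := by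
      rw [hedef]
      refine Finset.sum_congr rfl fun i _ => ?_
      rw [hw i, ← hm1, zpow_natCast]
    rw [this, sum_nodalWeight_pow _ _ hvs m (by rw [hcard]; exact hm2), hcard]
    by_cases hn : n = 1
    · have : m = K + 1 := by omega
      simp [hn, this]
    · have : ¬ (m = K + 1) := by omega
      simp [hn, this]
  -- the root power recurrence
  have hrootpow : ∀ (i : Fin (K+2)) (n : ℤ), 2 ≤ n →
      γ i ^ (n + K) = (q:ℂ) * γ i ^ (n - 1 + K)
        + ∑ j ∈ Finset.Icc 2 (K+2), γ i ^ (n - (j:ℤ) + K) := by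
    intro i n hn
    have hr := hroot i
    rw [hQeval] at hr
    have hr2 : γ i ^ (K+2) = (q:ℂ) * γ i ^ (K+1) + ∑ j ∈ range (K+1), γ i ^ j := by
      linear_combination hr
    have hz := hγne0 i
    have hs : ∑ j ∈ Finset.Icc 2 (K+2), γ i ^ (n - (j:ℤ) + K)
        = ∑ j ∈ range (K+1), γ i ^ (n - 2) * γ i ^ j := by
      refine Finset.sum_nbij' (fun j => K + 2 - j) (fun j => K + 2 - j) ?_ ?_ ?_ ?_ ?_
      · intro j hj; simp only [Finset.mem_Icc] at hj; simp only [Finset.mem_range]; omega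
      · intro j hj; simp only [Finset.mem_range] at hj; simp only [Finset.mem_Icc]; omega
      · intro j hj; simp only [Finset.mem_Icc] at hj
        show K + 2 - (K + 2 - j) = j
        omega
      · intro j hj; simp only [Finset.mem_range] at hj
        show K + 2 - (K + 2 - j) = j
        omega
      · intro j hj
        simp only [Finset.mem_Icc] at hj
        rw [← zpow_natCast (γ i) (K + 2 - j), ← zpow_add₀ hz]
        congr 1
        rw [Nat.cast_sub hj.2]
        push_cast
        ring
    rw [hs]
    have h1 : γ i ^ (n + K) = γ i ^ (n - 2) * γ i ^ (K + 2 : ℕ) := by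
      rw [← zpow_natCast (γ i) (K+2), ← zpow_add₀ hz]; congr 1; push_cast; ring
    have h2 : γ i ^ (n - 1 + K) = γ i ^ (n - 2) * γ i ^ (K + 1 : ℕ) := by
      rw [← zpow_natCast (γ i) (K+1), ← zpow_add₀ hz]; congr 1; push_cast; ring
    rw [h1, h2, ← Finset.mul_sum, ← mul_assoc, mul_comm ((q:ℂ)) (γ i ^ (n-2)), mul_assoc,
      ← mul_add, hr2]
  -- e satisfies the recurrence
  have heRec : ∀ n : ℤ, 2 ≤ n →
      e n = (q:ℂ) * e (n - 1) + ∑ j ∈ Finset.Icc 2 (K+2), e (n - (j:ℤ)) := by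
    intro n hn
    have expand : ∀ m : ℤ, e m = ∑ i : Fin (K+2), (E i)⁻¹ * γ i ^ (m + K) := fun m => rfl
    simp only [expand, Finset.mul_sum]
    rw [Finset.sum_comm, ← Finset.sum_add_distrib]
    refine Finset.sum_congr rfl fun i _ => ?_
    rw [hrootpow i n hn, mul_add, Finset.mul_sum]
    congr 1
    ring
  -- F agrees with e on the whole range
  have hFe : ∀ m : ℕ, (F (2 - ((K:ℤ)+2) + m) : ℂ) = e (2 - ((K:ℤ)+2) + m) := by
    intro m
    induction m using Nat.strong_induction_on with
    | _ m ih =>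
      set n : ℤ := 2 - ((K:ℤ)+2) + m with hn
      by_cases hsmall : n ≤ 1
      · rw [heinit n (by omega) hsmall]
        by_cases h1 : n = 1
        · rw [h1, if_pos rfl, hF1]; norm_num
        · rw [if_neg h1, hF0 n (by push_cast; omega) (by omega)]
          norm_num
      · push_neg at hsmall
        have hn2 : 2 ≤ n := hsmall
        have hcast : (F n : ℂ)
            = (q:ℂ) * (F (n-1) : ℂ) + ∑ j ∈ Finset.Icc 2 (K+2), ((F (n - (j:ℤ)) : ℝ) : ℂ) := by
          rw [hFrec n hn2]; push_cast; ring
        have key2 : ∀ j : ℕ, 1 ≤ j → j ≤ K + 2 → ((F (n - (j:ℤ)) : ℝ) : ℂ) = e (n - (j:ℤ)) := by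
          intro j hj1 hj2
          have hjm : j ≤ m := by omega
          have hrw : n - (j:ℤ) = 2 - ((K:ℤ)+2) + ((m - j : ℕ) : ℤ) := by
            rw [Nat.cast_sub hjm]; omega
          rw [hrw]
          exact ih (m - j) (by omega)
        have h1 : ((F (n-1) : ℝ) : ℂ) = e (n-1) := by
          have := key2 1 le_rfl (by omega)
          norm_num at this
          exact this
        rw [hcast, heRec n hn2, h1]
        congr 1
        exact Finset.sum_congr rfl fun j hj => by
          have hj' := Finset.mem_Icc.mp hj
          exact key2 j (by omega) hj'.2
  intro n hn
  have hn' : 2 - ((K:ℤ)+2) ≤ n := by push_cast at hn; omega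
  have hm : ∃ m : ℕ, n = 2 - ((K:ℤ)+2) + m := ⟨(n + K).toNat, by omega⟩
  obtain ⟨m, rfl⟩ := hm
  rw [hFe m]
  have expand : ∀ t : ℤ, e t = ∑ i : Fin (K+2), (E i)⁻¹ * γ i ^ (t + K) := fun _ => rfl
  rw [expand]
  push_cast
  exact Finset.sum_congr rfl fun i _ => (hterm i _).symm
end

section
/- Let k ≥ 2 and q ≥ 3 be integers. Then the characteristic polynomial Φ_{q,k}(t) = t^k − q t^{k−1} − t^{k−2} − ⋯ − t − 1 has exactly one positive real root γ, this root satisfies q < γ < q+1, and every other complex root of Φ_{q,k} has absolute value strictly less than 1. -/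
/-!
Write `k = j + 2`. Since `Φ(q) < 0 < Φ(q + 1)`, there is a root in `(q, q + 1)`, and it is the
only positive one because `Φ(x) / x^(j+1) = x - q - ∑_{m=1}^{j+1} x^(-m)` is strictly increasing
on `(0, ∞)`.

For the other roots, `(t - 1) Φ(t) = t^(j+1) (t - r) (t - s) + 1`, where `r, s > 0` are the roots
of `t² - (q+1) t + (q-1)`. Let `z` be a root with `|z| ≥ 1` off the positive real axis. Then
`|z - r| > ||z| - r|` and `|z - s| > ||z| - s|`, so `|z|^(j+1) |(|z| - r)(|z| - s)| < 1`. On the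
other hand the triangle inequality gives `Φ(|z|) ≤ 0`, so `(|z| - 1) Φ(|z|) ≤ 0`, that is
`|z|^(j+1) (|z| - r)(|z| - s) ≤ -1`, a contradiction.
-/

open Finset

/-- `genFibChar c j` is `Φ_{c,j+2}`; the degree is shifted so that no truncated subtraction
occurs. -/
def genFibChar {R : Type*} [CommRing R] (c : R) (j : ℕ) (t : R) : R :=
  t ^ (j + 2) - c * t ^ (j + 1) - ∑ i ∈ range (j + 1), t ^ i

section CommRing

variable {R : Type*} [CommRing R]

theorem sub_one_mul_genFibChar (c t : R) (j : ℕ) :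
    (t - 1) * genFibChar c j t = t ^ (j + 1) * (t ^ 2 - (c + 1) * t + (c - 1)) + 1 := by
  rw [genFibChar]
  linear_combination (-1 : R) * geom_sum_mul t (j + 1)

theorem sub_one_mul_genFibChar_of_roots {c r s : R} (hsum : r + s = c + 1)
    (hprod : r * s = c - 1) (t : R) (j : ℕ) :
    (t - 1) * genFibChar c j t = t ^ (j + 1) * ((t - r) * (t - s)) + 1 := by
  rw [sub_one_mul_genFibChar]
  linear_combination t ^ (j + 1) * (t * hsum - hprod)

end CommRing

@[simp, norm_cast]
theorem Complex.ofReal_genFibChar (c x : ℝ) (j : ℕ) :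
    ((genFibChar c j x : ℝ) : ℂ) = genFibChar (c : ℂ) j (x : ℂ) := by
  simp [genFibChar]

theorem genFibChar_div_pow (c : ℝ) (j : ℕ) {x : ℝ} (hx : x ≠ 0) :
    genFibChar c j x / x ^ (j + 1) = x - c - ∑ i ∈ range (j + 1), x⁻¹ ^ (i + 1) := by
  have hsum : x ^ (j + 1) * ∑ i ∈ range (j + 1), x⁻¹ ^ (i + 1) = ∑ i ∈ range (j + 1), x ^ i := by
    rw [mul_sum, ← sum_range_reflect (x ^ ·)]
    refine sum_congr rfl fun i hi => ?_
    have hi := mem_range.mp hi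
    rw [inv_pow, ← pow_sub₀ x hx (by omega : i + 1 ≤ j + 1)]
    congr 1
    omega
  rw [div_eq_iff (pow_ne_zero _ hx), genFibChar, ← hsum]
  ring

theorem strictMonoOn_genFibChar_div_pow (c : ℝ) (j : ℕ) :
    StrictMonoOn (fun x => genFibChar c j x / x ^ (j + 1)) (Set.Ioi 0) := by
  intro x (hx : 0 < x) y (hy : 0 < y) hxy
  have : ∑ i ∈ range (j + 1), y⁻¹ ^ (i + 1) ≤ ∑ i ∈ range (j + 1), x⁻¹ ^ (i + 1) :=
    sum_le_sum fun i _ => pow_le_pow_left₀ (by positivity) (inv_anti₀ hx hxy.le) _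
  simp only [genFibChar_div_pow c j hx.ne', genFibChar_div_pow c j hy.ne']
  linarith

theorem eq_of_genFibChar_eq_zero {c : ℝ} {j : ℕ} {x y : ℝ} (hx : 0 < x) (hy : 0 < y)
    (hfx : genFibChar c j x = 0) (hfy : genFibChar c j y = 0) : x = y :=
  (strictMonoOn_genFibChar_div_pow c j).injOn hx hy (by simp only [hfx, hfy, zero_div])

theorem exists_genFibChar_eq_zero {c : ℝ} (hc : 1 ≤ c) (j : ℕ) :
    ∃ γ ∈ Set.Ioo c (c + 1), genFibChar c j γ = 0 := by
  have hcont : ContinuousOn (genFibChar c j) (Set.Icc c (c + 1)) := by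
    unfold genFibChar; fun_prop
  have hneg : genFibChar c j c < 0 := by
    have : 1 ≤ ∑ i ∈ range (j + 1), c ^ i := by
      simpa using single_le_sum (f := (c ^ ·)) (fun i _ => by positivity)
        (mem_range.mpr j.succ_pos)
    rw [genFibChar]
    linarith [pow_succ c (j + 1)]
  have hpos : 0 < genFibChar c j (c + 1) := by
    have h := sub_one_mul_genFibChar c (c + 1) j
    have : 0 ≤ (c + 1) ^ (j + 1) * (c - 1) := mul_nonneg (by positivity) (by linarith)
    nlinarith
  exact intermediate_value_Ioo (by linarith) hcont ⟨hneg, hpos⟩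

theorem genFibChar_norm_nonpos {c : ℝ} (hc : 0 ≤ c) {j : ℕ} {z : ℂ}
    (hz : genFibChar (c : ℂ) j z = 0) : genFibChar c j ‖z‖ ≤ 0 := by
  have hsplit : z ^ (j + 2) = c * z ^ (j + 1) + ∑ i ∈ range (j + 1), z ^ i := by
    rw [genFibChar] at hz; linear_combination hz
  have : ‖z‖ ^ (j + 2) ≤ c * ‖z‖ ^ (j + 1) + ∑ i ∈ range (j + 1), ‖z‖ ^ i :=
    calc ‖z‖ ^ (j + 2) = ‖(c : ℂ) * z ^ (j + 1) + ∑ i ∈ range (j + 1), z ^ i‖ := by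
          rw [← hsplit, norm_pow]
      _ ≤ ‖(c : ℂ) * z ^ (j + 1)‖ + ∑ i ∈ range (j + 1), ‖z ^ i‖ :=
          (norm_add_le _ _).trans (by gcongr; exact norm_sum_le _ _)
      _ = c * ‖z‖ ^ (j + 1) + ∑ i ∈ range (j + 1), ‖z‖ ^ i := by
          simp [norm_pow, hc]
  rw [genFibChar]
  linarith

theorem abs_norm_sub_lt_norm_sub_ofReal {z : ℂ} (hz : z.re < ‖z‖) {r : ℝ} (hr : 0 < r) :
    |‖z‖ - r| < ‖z - r‖ := by
  refine abs_lt_of_sq_lt_sq ?_ (norm_nonneg _)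
  rw [Complex.sq_norm, Complex.normSq_apply]
  have := Complex.sq_norm z
  rw [Complex.normSq_apply] at this
  simp only [Complex.sub_re, Complex.ofReal_re, Complex.sub_im, Complex.ofReal_im, sub_zero]
  nlinarith

theorem abs_mul_lt_norm_mul {z : ℂ} (hz : z.re < ‖z‖) {r s : ℝ} (hr : 0 < r) (hs : 0 < s) :
    |(‖z‖ - r) * (‖z‖ - s)| < ‖(z - r) * (z - s)‖ := by
  rw [abs_mul, norm_mul]
  exact mul_lt_mul'' (abs_norm_sub_lt_norm_sub_ofReal hz hr)
    (abs_norm_sub_lt_norm_sub_ofReal hz hs) (abs_nonneg _) (abs_nonneg _)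

theorem exists_pos_add_mul_eq {c : ℝ} (hc : 1 < c) :
    ∃ r s : ℝ, 0 < r ∧ 0 < s ∧ r + s = c + 1 ∧ r * s = c - 1 := by
  set d := √((c - 1) ^ 2 + 4)
  have hd : d ^ 2 = (c - 1) ^ 2 + 4 := Real.sq_sqrt (by positivity)
  have hd0 : 0 ≤ d := Real.sqrt_nonneg _
  refine ⟨(c + 1 + d) / 2, (c + 1 - d) / 2, by positivity, ?_, by ring, ?_⟩
  · nlinarith
  · linear_combination -hd / 4

theorem norm_lt_one_of_genFibChar_eq_zero {c : ℝ} (hc : 1 < c) {j : ℕ} {z : ℂ}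
    (hz : genFibChar (c : ℂ) j z = 0) (hre : z.re < ‖z‖) : ‖z‖ < 1 := by
  by_contra! hx
  obtain ⟨r, s, hr, hs, hsum, hprod⟩ := exists_pos_add_mul_eq hc
  have hreal : ‖z‖ ^ (j + 1) * ((‖z‖ - r) * (‖z‖ - s)) ≤ -1 := by
    have := mul_nonpos_of_nonneg_of_nonpos (sub_nonneg.mpr hx)
      (genFibChar_norm_nonpos (by linarith) hz)
    linarith [sub_one_mul_genFibChar_of_roots hsum hprod ‖z‖ j]
  have hcomplex : ‖z‖ ^ (j + 1) * ‖(z - r) * (z - s)‖ = 1 := by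
    have h := sub_one_mul_genFibChar_of_roots (c := (c : ℂ)) (r := r) (s := s)
      (by exact_mod_cast hsum) (by exact_mod_cast hprod) z j
    rw [hz, mul_zero] at h
    rw [← norm_pow, ← norm_mul, eq_neg_of_add_eq_zero_left h.symm, norm_neg, norm_one]
  have : ‖z‖ ^ (j + 1) * |(‖z‖ - r) * (‖z‖ - s)| < 1 :=
    hcomplex ▸ mul_lt_mul_of_pos_left (abs_mul_lt_norm_mul hre hr hs) (by positivity)
  have := mul_le_mul_of_nonneg_left (neg_le_abs ((‖z‖ - r) * (‖z‖ - s)))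
    (by positivity : 0 ≤ ‖z‖ ^ (j + 1))
  linarith

/-- For integers `k ≥ 2` and `q ≥ 3`, the characteristic polynomial
`Φ_{q,k}(t) = t^k − q·t^{k-1} − t^{k-2} − ⋯ − t − 1` has exactly one positive real root `γ`,
this root satisfies `q < γ < q+1`, and every other complex root has absolute value `< 1`. -/
theorem qk_char_poly_dominant_root
    (q : ℤ) (k : ℕ) (hq : 3 ≤ q) (hk : 2 ≤ k) :
    ∃ γ : ℝ, 0 < γ ∧
      γ ^ k - (q : ℝ) * γ ^ (k - 1) - ∑ i ∈ Finset.range (k - 1), γ ^ i = 0 ∧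
      (∀ x : ℝ, 0 < x →
        x ^ k - (q : ℝ) * x ^ (k - 1) - ∑ i ∈ Finset.range (k - 1), x ^ i = 0 → x = γ) ∧
      (q : ℝ) < γ ∧ γ < (q : ℝ) + 1 ∧
      (∀ z : ℂ, z ^ k - (q : ℂ) * z ^ (k - 1) - ∑ i ∈ Finset.range (k - 1), z ^ i = 0 →
        z ≠ (γ : ℂ) → ‖z‖ < 1) := by
  obtain ⟨j, rfl⟩ : ∃ j, k = j + 2 := ⟨k - 2, by omega⟩
  rw [show j + 2 - 1 = j + 1 by omega, ← Complex.ofReal_intCast]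
  change ∃ γ : ℝ, 0 < γ ∧ genFibChar (q : ℝ) j γ = 0 ∧
    (∀ x : ℝ, 0 < x → genFibChar (q : ℝ) j x = 0 → x = γ) ∧ (q : ℝ) < γ ∧ γ < q + 1 ∧
    ∀ z : ℂ, genFibChar ((q : ℝ) : ℂ) j z = 0 → z ≠ γ → ‖z‖ < 1
  have hq1 : (1 : ℝ) < q := by exact_mod_cast (by omega : 1 < q)
  obtain ⟨γ, ⟨hqγ, hγq⟩, hγ⟩ := exists_genFibChar_eq_zero hq1.le j
  have hγ0 : 0 < γ := by linarith
  refine ⟨γ, hγ0, hγ, fun x hx hfx => eq_of_genFibChar_eq_zero hx hγ0 hfx hγ, hqγ, hγq,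
    fun z hz hzγ => ?_⟩
  rcases (Complex.re_le_norm z).lt_or_eq with hre | hre
  · exact norm_lt_one_of_genFibChar_eq_zero hq1 hz hre
  have hz_real : ((‖z‖ : ℝ) : ℂ) = z := RCLike.norm_of_nonneg' (Complex.re_eq_norm.mp hre)
  rcases (norm_nonneg z).eq_or_lt with hz0 | hz0
  · rw [← hz0]; exact one_pos
  · refine absurd ?_ hzγ
    rw [← hz_real, eq_of_genFibChar_eq_zero hz0 hγ0 (by exact_mod_cast hz_real ▸ hz) hγ]
end

section
/- Let q ≥ 3 be a fixed integer, and for each integer k ≥ 2 let γ_k denote the dominant root of Φ_{q,k}, i.e. the unique real root of Φ_{q,k}(t) = t^k − q t^{k−1} − t^{k−2} − ⋯ − t − 1 in the interval (q, q+1). Then for all integers l > k ≥ 2 one has γ_l > γ_k. -/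
/-!
Multiplying the root equation by `γ - 1` and dividing by `γ ^ (k - 1)` gives
`(γ_k - 1) (γ_k - q) = 1 - γ_k ^ -(k - 1)`. If `γ_l ≤ γ_k`, subtracting the two identities yields
`(γ_k - γ_l) (γ_k + γ_l - q - 1) = γ_l ^ -(l - 1) - γ_k ^ -(k - 1) < γ_l ^ -(k - 1) - γ_k ^ -(k - 1)`.
The left side is at least `2 (γ_k - γ_l)` because `q ≥ 3`, while `t ↦ t ^ -m` is `1`-Lipschitz on
`[2, ∞)`, so the right side is at most `γ_k - γ_l`: a contradiction.
-/

open Finset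

theorem sub_one_mul_sub_eq_one_sub_inv_pow {K : Type*} [Field K] {q x : K} {k : ℕ}
    (hk : k ≠ 0) (hx : x ≠ 0)
    (hroot : x ^ k - q * x ^ (k - 1) - ∑ i ∈ range (k - 1), x ^ i = 0) :
    (x - 1) * (x - q) = 1 - (x ^ (k - 1))⁻¹ := by
  obtain ⟨m, rfl⟩ := Nat.exists_eq_add_one_of_ne_zero hk
  rw [Nat.add_sub_cancel] at hroot ⊢
  have hcleared : (x - 1) * (x - q) * x ^ m = x ^ m - 1 := by
    linear_combination (x - 1) * hroot + geom_sum_mul x m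
  field_simp
  linear_combination hcleared

theorem inv_pow_sub_inv_pow_le_sub {a b : ℝ} (hb : 2 ≤ b) (hba : b ≤ a) (m : ℕ) :
    (b ^ m)⁻¹ - (a ^ m)⁻¹ ≤ a - b := by
  have hb0 : 0 < b := by linarith
  have ha1 : 1 ≤ a := by linarith
  have hmean : a ^ m - b ^ m ≤ (a - b) * (m * a ^ (m - 1)) := by
    have := abs_pow_sub_pow_le a b m
    rwa [abs_of_nonneg (sub_nonneg.2 (pow_le_pow_left₀ hb0.le hba m)),
      abs_of_nonneg (sub_nonneg.2 hba), abs_of_pos hb0, abs_of_pos (hb0.trans_le hba),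
      max_eq_left hba, mul_assoc] at this
  have hcoeff : m * a ^ (m - 1) ≤ b ^ m * a ^ m := by
    gcongr
    · calc (m : ℝ) ≤ 2 ^ m := by exact_mod_cast Nat.lt_two_pow_self.le
        _ ≤ b ^ m := by gcongr
    · exact Nat.sub_le m 1
  rw [inv_sub_inv (by positivity) (by positivity), div_le_iff₀ (by positivity)]
  nlinarith [sub_nonneg.2 hba]

theorem qk_dominant_root_strict_mono_general
    (q : ℤ) (hq : 3 ≤ q) (k l : ℕ) (hk : 2 ≤ k) (hkl : k < l)
    (γk γl : ℝ)
    (hγk_lb : (q : ℝ) < γk)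
    (hγk_root : γk ^ k - (q : ℝ) * γk ^ (k - 1) - ∑ i ∈ Finset.range (k - 1), γk ^ i = 0)
    (hγl_lb : (q : ℝ) < γl)
    (hγl_root : γl ^ l - (q : ℝ) * γl ^ (l - 1) - ∑ i ∈ Finset.range (l - 1), γl ^ i = 0) :
    γk < γl := by
  have hq' : (3 : ℝ) ≤ q := by exact_mod_cast hq
  have hk_eq := sub_one_mul_sub_eq_one_sub_inv_pow (by omega) (by linarith) hγk_root
  have hl_eq := sub_one_mul_sub_eq_one_sub_inv_pow (by omega) (by linarith) hγl_root
  by_contra! hle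
  have hkey : (γk - γl) * (γk + γl - q - 1) = (γl ^ (l - 1))⁻¹ - (γk ^ (k - 1))⁻¹ := by
    linear_combination hk_eq - hl_eq
  have hdrop : (γl ^ (l - 1))⁻¹ < (γl ^ (k - 1))⁻¹ :=
    inv_strictAnti₀ (pow_pos (by linarith) _) (pow_lt_pow_right₀ (by linarith) (by omega))
  have hlip := inv_pow_sub_inv_pow_le_sub (by linarith) hle (k - 1)
  have hfactor : 2 * (γk - γl) ≤ (γk + γl - q - 1) * (γk - γl) :=
    mul_le_mul_of_nonneg_right (by linarith) (sub_nonneg.2 hle)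
  linarith

/-- For a fixed integer `q ≥ 3`, the dominant roots of `Φ_{q,k}` are
strictly increasing in `k`: if `l > k ≥ 2`, then `γ_l > γ_k`. -/
theorem qk_dominant_root_strict_mono
    (q : ℤ) (hq : 3 ≤ q) (k l : ℕ) (hk : 2 ≤ k) (hkl : k < l)
    (γk γl : ℝ)
    (hγk_lb : (q : ℝ) < γk) (hγk_ub : γk < (q : ℝ) + 1)
    (hγk_root : γk ^ k - (q : ℝ) * γk ^ (k - 1) - ∑ i ∈ Finset.range (k - 1), γk ^ i = 0)
    (hγl_lb : (q : ℝ) < γl) (hγl_ub : γl < (q : ℝ) + 1)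
    (hγl_root : γl ^ l - (q : ℝ) * γl ^ (l - 1) - ∑ i ∈ Finset.range (l - 1), γl ^ i = 0) :
    γk < γl :=
  qk_dominant_root_strict_mono_general q hq k l hk hkl γk γl hγk_lb hγk_root hγl_lb hγl_root
end

section
/- Let q ≥ 3 and k ≥ 2 be integers, let γ_k be the dominant root of Φ_{q,k}, i.e. the unique real root of Φ_{q,k}(t) = t^k − q t^{k−1} − t^{k−2} − ⋯ − t − 1 in (q, q+1), and let α_q = ((q+1)+√(q²−2q+5))/2 be the larger root of t² − (q+1)t + (q−1) = 0. Then α_q·(1 − 1/q^k) < γ_k < α_q. -/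
/-- For integers `q ≥ 3` and `k ≥ 2`, the dominant root `γ_k` of
`Φ_{q,k}` satisfies `α_q·(1 − 1/q^k) < γ_k < α_q`,
where `α_q = ((q+1)+√(q²−2q+5))/2`. -/
theorem qk_dominant_root_near_alpha
    (q : ℤ) (k : ℕ) (hq : 3 ≤ q) (hk : 2 ≤ k)
    (γ : ℝ)
    (hγ_lb : (q : ℝ) < γ) (hγ_ub : γ < (q : ℝ) + 1)
    (hγ_root : γ ^ k - (q : ℝ) * γ ^ (k - 1) - ∑ i ∈ Finset.range (k - 1), γ ^ i = 0) :
    (((q : ℝ) + 1 + Real.sqrt ((q : ℝ) ^ 2 - 2 * q + 5)) / 2) * (1 - 1 / (q : ℝ) ^ k) < γ ∧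
      γ < ((q : ℝ) + 1 + Real.sqrt ((q : ℝ) ^ 2 - 2 * q + 5)) / 2 := by
  obtain ⟨n, rfl⟩ : ∃ n, k = n + 1 := ⟨k - 1, by omega⟩
  have hq3 : (3 : ℝ) ≤ (q : ℝ) := by exact_mod_cast hq
  have hγpos : (0 : ℝ) < γ := by linarith
  have hr : γ ^ (n + 1) - (q : ℝ) * γ ^ n - ∑ i ∈ Finset.range n, γ ^ i = 0 := by
    simpa using hγ_root
  have key : γ ^ n * (γ ^ 2 - ((q : ℝ) + 1) * γ + ((q : ℝ) - 1)) = -1 := by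
    have hg := geom_sum_mul γ n
    linear_combination hg + (γ - 1) * hr
  set s : ℝ := Real.sqrt ((q : ℝ) ^ 2 - 2 * q + 5) with hsdef
  have hs0 : 0 ≤ s := Real.sqrt_nonneg _
  have hs : s ^ 2 = (q : ℝ) ^ 2 - 2 * q + 5 := Real.sq_sqrt (by nlinarith)
  have hs_lb : (q : ℝ) - 1 < s := by nlinarith
  have hs_ub : s < (q : ℝ) + 1 := by nlinarith
  set α : ℝ := ((q : ℝ) + 1 + s) / 2 with hαdef
  set β : ℝ := ((q : ℝ) + 1 - s) / 2 with hβdef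
  have hfac : γ ^ n * ((α - γ) * (γ - β)) = 1 := by
    rw [hαdef, hβdef]
    linear_combination (-1 : ℝ) * key + (γ ^ n / 4) * hs
  have hγn_pos : 0 < γ ^ n := pow_pos hγpos n
  have hβ1 : β < 1 := by rw [hβdef]; linarith
  have hden_pos : 0 < γ - β := by linarith
  have hαγ : 0 < α - γ := by nlinarith [mul_pos hγn_pos hden_pos]
  have hub : γ < α := by linarith
  -- lower bound
  have hqn_pos : 0 < (q : ℝ) ^ n := by positivity
  have hqm : (q : ℝ) ^ n ≤ γ ^ n := pow_le_pow_left₀ (by linarith) hγ_lb.le n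
  have hβq : (q : ℝ) - 1 < γ - β := by linarith
  have h1 : (q : ℝ) ^ n * ((q : ℝ) - 1) < γ ^ n * (γ - β) := by
    calc (q : ℝ) ^ n * ((q : ℝ) - 1) ≤ γ ^ n * ((q : ℝ) - 1) :=
          mul_le_mul_of_nonneg_right hqm (by linarith)
      _ < γ ^ n * (γ - β) := mul_lt_mul_of_pos_left hβq hγn_pos
  have hkey2 : (α - γ) * ((q : ℝ) ^ n * ((q : ℝ) - 1)) < 1 := by
    calc (α - γ) * ((q : ℝ) ^ n * ((q : ℝ) - 1))
        < (α - γ) * (γ ^ n * (γ - β)) := mul_lt_mul_of_pos_left h1 hαγ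
      _ = 1 := by linear_combination hfac
  have hα_pos : 0 < α := by rw [hαdef]; linarith
  have hq1 : (q : ℝ) < α * ((q : ℝ) - 1) := by nlinarith
  have hP : 0 < (α - γ) * (q : ℝ) ^ n := mul_pos hαγ hqn_pos
  have h3 : (α - γ) * (q : ℝ) ^ (n + 1) < α := by
    have e1 := mul_lt_mul_of_pos_left hq1 hP
    have e2 := mul_lt_mul_of_pos_left hkey2 hα_pos
    have e3 : (α - γ) * (q : ℝ) ^ (n + 1) = ((α - γ) * (q : ℝ) ^ n) * (q : ℝ) := by ring
    rw [e3]
    calc ((α - γ) * (q : ℝ) ^ n) * (q : ℝ)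
        < (α - γ) * (q : ℝ) ^ n * (α * ((q : ℝ) - 1)) := e1
      _ = α * ((α - γ) * ((q : ℝ) ^ n * ((q : ℝ) - 1))) := by ring
      _ < α * 1 := e2
      _ = α := mul_one α
  have hqk_pos : (0 : ℝ) < (q : ℝ) ^ (n + 1) := by positivity
  have h5 : α - γ < α / (q : ℝ) ^ (n + 1) := (lt_div_iff₀ hqk_pos).mpr h3
  have h6 : α * (1 - 1 / (q : ℝ) ^ (n + 1)) = α - α / (q : ℝ) ^ (n + 1) := by ring
  constructor
  · rw [h6]; linarith
  · exact hub
end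

section
/- Let q ≥ 3 and k ≥ 2 be integers, and set c_{q,k} = ((q+1)k + √(k²(q²−2q+5) + 4(q−1)))/(2(k+1)). Then the function g_{q,k}(x) = (x−1)/((k+1)x² − (q+1)kx + (q−1)(k−1)) is positive and strictly decreasing on the open interval (c_{q,k}, ∞). -/
/-- For integers `q ≥ 3` and `k ≥ 2`, with
`c_{q,k} = ((q+1)k + √(k²(q²−2q+5) + 4(q−1)))/(2(k+1))`, the function
`g_{q,k}(x) = (x−1)/((k+1)x² − (q+1)k·x + (q−1)(k−1))` is positive and strictly
decreasing on `(c_{q,k}, ∞)`. -/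
theorem qk_g_pos_strictAnti
    (q : ℤ) (k : ℕ) (hq : 3 ≤ q) (hk : 2 ≤ k)
    (c : ℝ)
    (hc : c = (((q : ℝ) + 1) * (k : ℝ) +
      Real.sqrt ((k : ℝ) ^ 2 * ((q : ℝ) ^ 2 - 2 * q + 5) + 4 * ((q : ℝ) - 1))) /
      (2 * ((k : ℝ) + 1)))
    (g : ℝ → ℝ)
    (hg : ∀ x : ℝ, g x = (x - 1) /
      (((k : ℝ) + 1) * x ^ 2 - ((q : ℝ) + 1) * (k : ℝ) * x + ((q : ℝ) - 1) * ((k : ℝ) - 1))) :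
    (∀ x ∈ Set.Ioi c, 0 < g x) ∧ StrictAntiOn g (Set.Ioi c) := by
  have hk1 : (2:ℝ) ≤ (k:ℝ) := by exact_mod_cast hk
  have hq1 : (3:ℝ) ≤ (q:ℝ) := by exact_mod_cast hq
  set s := Real.sqrt ((k : ℝ) ^ 2 * ((q : ℝ) ^ 2 - 2 * q + 5) + 4 * ((q : ℝ) - 1)) with hs
  have hrad : (0:ℝ) ≤ (k : ℝ) ^ 2 * ((q : ℝ) ^ 2 - 2 * q + 5) + 4 * ((q : ℝ) - 1) := by
    have h5 : (0:ℝ) ≤ (q : ℝ) ^ 2 - 2 * q + 5 := by nlinarith [sq_nonneg ((q:ℝ) - 1)]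
    nlinarith [mul_nonneg (sq_nonneg (k:ℝ)) h5]
  have hs0 : 0 ≤ s := Real.sqrt_nonneg _
  have hssq : s ^ 2 = (k : ℝ) ^ 2 * ((q : ℝ) ^ 2 - 2 * q + 5) + 4 * ((q : ℝ) - 1) :=
    Real.sq_sqrt hrad
  have hkpos : (0:ℝ) < (k:ℝ) + 1 := by linarith
  have hceq : 2 * ((k:ℝ)+1) * c = ((q:ℝ)+1)*k + s := by
    rw [hc]; field_simp
  have hc1 : 1 < c := by nlinarith
  -- the denominator vanishes at c
  have hseq : s = 2 * ((k:ℝ)+1) * c - ((q:ℝ)+1)*k := by linarith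
  have hDc : ((k : ℝ) + 1) * c ^ 2 - ((q : ℝ) + 1) * (k : ℝ) * c
      + ((q : ℝ) - 1) * ((k : ℝ) - 1) = 0 := by
    rw [hseq] at hssq
    have h4 : 4*((k:ℝ)+1) * (((k : ℝ) + 1) * c ^ 2 - ((q : ℝ) + 1) * (k : ℝ) * c
        + ((q : ℝ) - 1) * ((k : ℝ) - 1)) = 0 := by linear_combination hssq
    have hne : (4*((k:ℝ)+1)) ≠ 0 := by positivity
    exact (mul_eq_zero.mp h4).resolve_left hne
  have hD : ∀ x : ℝ, c < x →
      0 < ((k : ℝ) + 1) * x ^ 2 - ((q : ℝ) + 1) * (k : ℝ) * x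
        + ((q : ℝ) - 1) * ((k : ℝ) - 1) := by
    intro x hx
    have hfac : 0 < ((k:ℝ)+1) * (x + c) - ((q:ℝ)+1)*(k:ℝ) := by nlinarith
    nlinarith [mul_pos (sub_pos.2 hx) hfac]
  constructor
  · intro x hx
    have hx' : c < x := hx
    rw [hg x]
    exact div_pos (by linarith) (hD x hx')
  · intro x hx y hy hxy
    have hx' : c < x := hx
    have hy' : c < y := hy
    have hDx := hD x hx'
    have hDy := hD y hy'
    rw [hg x, hg y]
    rw [div_lt_div_iff₀ hDy hDx]
    have h1 : 0 < x - 1 := by linarith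
    have h2 : 0 < y - 1 := by linarith
    have h3 : 0 < y - x := by linarith
    nlinarith [mul_pos h3 (mul_pos h1 h2), mul_pos h3 h1, mul_pos h3 h2]
end

section
/- Let q ≥ 3 and k ≥ 2 be integers, let α_q = ((q+1)+√(q²−2q+5))/2, and set c_{q,k} = ((q+1)k + √(k²(q²−2q+5) + 4(q−1)))/(2(k+1)). Then c_{q,k} < (α_q + √(q−1)/k)·(1 − 1/(k+1)). -/
/-- For integers `q ≥ 3` and `k ≥ 2`, with
`α_q = ((q+1)+√(q²−2q+5))/2` and
`c_{q,k} = ((q+1)k + √(k²(q²−2q+5) + 4(q−1)))/(2(k+1))`, one has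
`c_{q,k} < (α_q + √(q−1)/k)·(1 − 1/(k+1))`. -/
theorem qk_c_lt_bound
    (q : ℤ) (k : ℕ) (hq : 3 ≤ q) (hk : 2 ≤ k)
    (α : ℝ) (hα : α = ((q : ℝ) + 1 + Real.sqrt ((q : ℝ) ^ 2 - 2 * q + 5)) / 2)
    (c : ℝ)
    (hc : c = (((q : ℝ) + 1) * (k : ℝ) +
      Real.sqrt ((k : ℝ) ^ 2 * ((q : ℝ) ^ 2 - 2 * q + 5) + 4 * ((q : ℝ) - 1))) /
      (2 * ((k : ℝ) + 1))) :
    c < (α + Real.sqrt ((q : ℝ) - 1) / (k : ℝ)) * (1 - 1 / ((k : ℝ) + 1)) := by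
  have hq3 : (3 : ℝ) ≤ (q : ℝ) := by exact_mod_cast hq
  have hk2 : (2 : ℝ) ≤ (k : ℝ) := by exact_mod_cast hk
  have hkpos : (0 : ℝ) < (k : ℝ) := by linarith
  have hD : (0 : ℝ) ≤ (q : ℝ) ^ 2 - 2 * q + 5 := by nlinarith
  have hq1 : (0 : ℝ) < (q : ℝ) - 1 := by linarith
  have hsD : 0 < Real.sqrt ((q : ℝ) ^ 2 - 2 * q + 5) := Real.sqrt_pos.2 (by nlinarith)
  have hsq1 : 0 < Real.sqrt ((q : ℝ) - 1) := Real.sqrt_pos.2 hq1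
  have hsDsq : Real.sqrt ((q : ℝ) ^ 2 - 2 * q + 5) ^ 2 = (q : ℝ) ^ 2 - 2 * q + 5 :=
    Real.sq_sqrt hD
  have hsq1sq : Real.sqrt ((q : ℝ) - 1) ^ 2 = (q : ℝ) - 1 := Real.sq_sqrt hq1.le
  have key : Real.sqrt ((k : ℝ) ^ 2 * ((q : ℝ) ^ 2 - 2 * q + 5) + 4 * ((q : ℝ) - 1)) <
      (k : ℝ) * Real.sqrt ((q : ℝ) ^ 2 - 2 * q + 5) + 2 * Real.sqrt ((q : ℝ) - 1) := by
    rw [show ((k : ℝ) ^ 2 * ((q : ℝ) ^ 2 - 2 * q + 5) + 4 * ((q : ℝ) - 1)) =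
      (k : ℝ) ^ 2 * Real.sqrt ((q : ℝ) ^ 2 - 2 * q + 5) ^ 2 +
      4 * Real.sqrt ((q : ℝ) - 1) ^ 2 by rw [hsDsq, hsq1sq]]
    have hpos : 0 < (k : ℝ) * Real.sqrt ((q : ℝ) ^ 2 - 2 * q + 5) +
        2 * Real.sqrt ((q : ℝ) - 1) := by positivity
    rw [show (k : ℝ) ^ 2 * Real.sqrt ((q : ℝ) ^ 2 - 2 * q + 5) ^ 2 +
        4 * Real.sqrt ((q : ℝ) - 1) ^ 2 =
        ((k : ℝ) * Real.sqrt ((q : ℝ) ^ 2 - 2 * q + 5)) ^ 2 +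
        (2 * Real.sqrt ((q : ℝ) - 1)) ^ 2 by ring]
    calc Real.sqrt (((k : ℝ) * Real.sqrt ((q : ℝ) ^ 2 - 2 * q + 5)) ^ 2 +
          (2 * Real.sqrt ((q : ℝ) - 1)) ^ 2) <
        Real.sqrt (((k : ℝ) * Real.sqrt ((q : ℝ) ^ 2 - 2 * q + 5) +
          2 * Real.sqrt ((q : ℝ) - 1)) ^ 2) := by
          apply Real.sqrt_lt_sqrt (by positivity)
          nlinarith [mul_pos (mul_pos hkpos hsD) hsq1]
      _ = _ := Real.sqrt_sq hpos.le
  subst hc hα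
  rw [div_lt_iff₀ (by positivity : (0 : ℝ) < 2 * ((k : ℝ) + 1))]
  have hk1 : ((k : ℝ) + 1) ≠ 0 := by positivity
  have hkne : (k : ℝ) ≠ 0 := hkpos.ne'
  have expand : (((q : ℝ) + 1 + Real.sqrt ((q : ℝ) ^ 2 - 2 * q + 5)) / 2 +
      Real.sqrt ((q : ℝ) - 1) / (k : ℝ)) * (1 - 1 / ((k : ℝ) + 1)) * (2 * ((k : ℝ) + 1)) =
      ((q : ℝ) + 1) * k + ((k : ℝ) * Real.sqrt ((q : ℝ) ^ 2 - 2 * q + 5) +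
      2 * Real.sqrt ((q : ℝ) - 1)) := by
    field_simp
    ring
  rw [expand]
  linarith [key]
end

section
/- Let q ≥ 3 and k ≥ 2 be integers, and let γ_k be the dominant root of Φ_{q,k}, i.e. the unique real root of Φ_{q,k}(t) = t^k − q t^{k−1} − t^{k−2} − ⋯ − t − 1 in (q, q+1). Then 1/(q+1) < g_{q,k}(γ_k) < 1/q, where g_{q,k}(x) = (x−1)/((k+1)x² − (q+1)kx + (q−1)(k−1)). -/
/-!
Multiplying `Φ_{q,k}(γ) = 0` by `γ - 1` gives `γ^(k-1) (γ² - (q+1)γ + q - 1) = -1`, so the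
denominator of `g_{q,k}(γ)` equals `(q+1)γ - 2(q-1) - (k+1)/γ^(k-1)`. It therefore exceeds
`q(γ-1)` by `γ - q + 2 - (k+1)/γ^(k-1) > 0` and falls short of `(q+1)(γ-1)` by
`q - 3 + (k+1)/γ^(k-1) > 0`.
-/

theorem pow_mul_quadratic_eq_neg_one_of_root {R : Type*} [CommRing R] {q x : R} {n : ℕ}
    (h : x ^ (n + 1) - q * x ^ n - ∑ i ∈ Finset.range n, x ^ i = 0) :
    x ^ n * (x ^ 2 - (q + 1) * x + (q - 1)) = -1 := by
  linear_combination (x - 1) * h + geom_sum_mul x n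

theorem natCast_add_two_lt_two_mul_pow {x : ℝ} {n : ℕ} (hn : 1 ≤ n) (hx : 2 ≤ x) :
    (n : ℝ) + 2 < 2 * x ^ n := by
  have hbernoulli : 1 + (n : ℝ) ≤ 2 ^ n := by
    simpa [one_add_one_eq_two] using one_add_mul_le_pow (by norm_num : (-2 : ℝ) ≤ 1) n
  have hpow : (2 : ℝ) ^ n ≤ x ^ n := pow_le_pow_left₀ (by norm_num) hx n
  have hn' : (1 : ℝ) ≤ n := by exact_mod_cast hn
  linarith

theorem one_div_add_one_lt_div_and_div_lt_one_div {q c d : ℝ} (hq : 0 < q) (hc : 0 < c)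
    (hlo : q * c < d) (hhi : d < (q + 1) * c) :
    1 / (q + 1) < c / d ∧ c / d < 1 / q := by
  have hd : 0 < d := lt_trans (by positivity) hlo
  constructor
  · rw [div_lt_div_iff₀ (by linarith) hd]
    linarith
  · rw [div_lt_div_iff₀ hd hq]
    linarith

/-- The denominator of `g_{q,k}`. -/
def qkDenom (q k x : ℝ) : ℝ :=
  (k + 1) * x ^ 2 - (q + 1) * k * x + (q - 1) * (k - 1)

section DominantRoot

variable {q γ : ℝ} {n : ℕ}

theorem qkDenom_mul_pow_eq (hroot : γ ^ n * (γ ^ 2 - (q + 1) * γ + (q - 1)) = -1) :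
    qkDenom q (n + 1) γ * γ ^ n = ((q + 1) * γ - 2 * (q - 1)) * γ ^ n - (n + 2) := by
  unfold qkDenom
  linear_combination (n + 2 : ℝ) * hroot

theorem mul_sub_one_lt_qkDenom (hγ : q < γ) (hγ2 : 2 ≤ γ) (hn : 1 ≤ n)
    (hroot : γ ^ n * (γ ^ 2 - (q + 1) * γ + (q - 1)) = -1) :
    q * (γ - 1) < qkDenom q (n + 1) γ := by
  have hpow : 0 < γ ^ n := by positivity
  have hgap : (n : ℝ) + 2 < 2 * γ ^ n := natCast_add_two_lt_two_mul_pow hn hγ2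
  refine lt_of_mul_lt_mul_right ?_ hpow.le
  rw [qkDenom_mul_pow_eq hroot]
  nlinarith

theorem qkDenom_lt_mul_sub_one (hq : 3 ≤ q) (hγ : 0 < γ)
    (hroot : γ ^ n * (γ ^ 2 - (q + 1) * γ + (q - 1)) = -1) :
    qkDenom q (n + 1) γ < (q + 1) * (γ - 1) := by
  have hpow : 0 < γ ^ n := by positivity
  refine lt_of_mul_lt_mul_right ?_ hpow.le
  rw [qkDenom_mul_pow_eq hroot]
  nlinarith

end DominantRoot

theorem qk_g_at_dominant_root_general
    (q : ℤ) (k : ℕ) (hq : 3 ≤ q) (hk : 2 ≤ k)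
    (γ : ℝ)
    (hγ_lb : (q : ℝ) < γ)
    (hγ_root : γ ^ k - (q : ℝ) * γ ^ (k - 1) - ∑ i ∈ Finset.range (k - 1), γ ^ i = 0)
    (g : ℝ → ℝ)
    (hg : ∀ x : ℝ, g x = (x - 1) /
      (((k : ℝ) + 1) * x ^ 2 - ((q : ℝ) + 1) * (k : ℝ) * x + ((q : ℝ) - 1) * ((k : ℝ) - 1))) :
    1 / ((q : ℝ) + 1) < g γ ∧ g γ < 1 / (q : ℝ) := by
  obtain ⟨n, rfl⟩ : ∃ n, k = n + 1 := ⟨k - 1, by omega⟩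
  have hqR : (3 : ℝ) ≤ q := by exact_mod_cast hq
  have hroot := pow_mul_quadratic_eq_neg_one_of_root (by simpa using hγ_root)
  have hgγ : g γ = (γ - 1) / qkDenom q (n + 1) γ := by
    rw [hg, qkDenom]
    push_cast
    rfl
  rw [hgγ]
  exact one_div_add_one_lt_div_and_div_lt_one_div (by linarith) (by linarith)
    (mul_sub_one_lt_qkDenom hγ_lb (by linarith) (by omega) hroot)
    (qkDenom_lt_mul_sub_one hqR (by linarith) hroot)

/-- For integers `q ≥ 3` and `k ≥ 2`, the dominant root `γ_k` of
`Φ_{q,k}(t) = t^k − q·t^{k-1} − t^{k-2} − ⋯ − t − 1` (its unique real root in `(q, q+1)`)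
satisfies `1/(q+1) < g_{q,k}(γ_k) < 1/q`. -/
theorem qk_g_at_dominant_root
    (q : ℤ) (k : ℕ) (hq : 3 ≤ q) (hk : 2 ≤ k)
    (γ : ℝ)
    (hγ_lb : (q : ℝ) < γ) (hγ_ub : γ < (q : ℝ) + 1)
    (hγ_root : γ ^ k - (q : ℝ) * γ ^ (k - 1) - ∑ i ∈ Finset.range (k - 1), γ ^ i = 0)
    (g : ℝ → ℝ)
    (hg : ∀ x : ℝ, g x = (x - 1) /
      (((k : ℝ) + 1) * x ^ 2 - ((q : ℝ) + 1) * (k : ℝ) * x + ((q : ℝ) - 1) * ((k : ℝ) - 1))) :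
    1 / ((q : ℝ) + 1) < g γ ∧ g γ < 1 / (q : ℝ) :=
  qk_g_at_dominant_root_general q k hq hk γ hγ_lb hγ_root g hg
end

section
/- Let q ≥ 3 and k ≥ 2 be integers, and let γ be the dominant root of Φ_{q,k}, i.e. the unique real root of Φ_{q,k}(t) = t^k − q t^{k−1} − t^{k−2} − ⋯ − t − 1 in (q, q+1). Then the error E^{(k)}_{q,n} = F^{(k)}_{q,n} − g_{q,k}(γ)·γ^n tends to 0 as n → ∞, where g_{q,k}(x) = (x−1)/((k+1)x² − (q+1)kx + (q−1)(k−1)). -/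
/-!
Write `Φ = Φ_{q,k} = (X - γ) Ψ`. Since `Φ(γ) = 0`, the coefficients of the cofactor `Ψ` satisfy
`γ a₀ = 1` and `γ a_{i+1} = a_i + 1`, so `0 < a₀ ≤ a₁ ≤ ⋯ ≤ a_{k-1} = 1` as soon as `γ ≥ 2`; by the
Eneström–Kakeya argument all roots of `Ψ` lie in the closed unit disc. On the unit circle a root of
`Φ` would satisfy `|z² - (q+1) z + (q-1)| = 1`, by the identity
`(X - 1) Φ = X^{k-1}(X² - (q+1) X + (q-1)) + 1`; this forces `z = 1`, and `Φ(1) ≠ 0`.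

Let `S` be the shift of sequences. The shifted sequence `f m = F (m + 2 - k)` satisfies `Φ(S) f = 0`
and has initial values `0, …, 0, 1`, so `w = Ψ(S) f` solves `w (n+1) = γ w n` with `w 0 = 1`, i.e.
`w n = γⁿ`. Hence `Ψ(S)` kills `f n - γⁿ / Ψ(γ)`, and any sequence killed by a polynomial with all
roots in the open unit disc tends to `0`: factor the polynomial into linear factors and use that
`e (n+1) - z e n → 0` with `|z| < 1` forces `e → 0`. Finally `Ψ(γ) = Φ'(γ)`, and differentiating
the identity for `(X - 1) Φ` at `γ` gives `g(γ) = γ^{k-2} / Ψ(γ)`.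
-/

open Filter Polynomial Finset Topology

theorem tendsto_zero_of_le_mul_add {a b : ℕ → ℝ} {r : ℝ} (hr₀ : 0 ≤ r) (hr : r < 1)
    (ha : ∀ n, 0 ≤ a n) (hab : ∀ n, a (n + 1) ≤ r * a n + b n)
    (hb : Tendsto b atTop (𝓝 0)) : Tendsto a atTop (𝓝 0) := by
  refine Metric.tendsto_atTop.2 fun ε hε => ?_
  obtain ⟨N, hN⟩ := eventually_atTop.1
    (hb.eventually (eventually_le_nhds (by nlinarith : (0 : ℝ) < (1 - r) * (ε / 2))))
  have hdecay : ∀ m, a (N + m) - ε / 2 ≤ r ^ m * (a N - ε / 2) := by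
    intro m
    induction m with
    | zero => simp
    | succ m ih =>
      calc a (N + m + 1) - ε / 2 ≤ r * (a (N + m) - ε / 2) := by
            linarith [hab (N + m), hN (N + m) (by omega)]
        _ ≤ r ^ (m + 1) * (a N - ε / 2) := by
            rw [pow_succ', mul_assoc]; exact mul_le_mul_of_nonneg_left ih hr₀
  have hgeom : Tendsto (fun m => r ^ m * (a N - ε / 2)) atTop (𝓝 0) := by
    simpa using (tendsto_pow_atTop_nhds_zero_of_lt_one hr₀ hr).mul_const (a N - ε / 2)
  obtain ⟨M, hM⟩ := eventually_atTop.1 (hgeom.eventually (eventually_lt_nhds (half_pos hε)))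
  refine ⟨N + M, fun n hn => ?_⟩
  obtain ⟨m, rfl⟩ := Nat.exists_eq_add_of_le (le_trans (Nat.le_add_right N M) hn)
  rw [Real.dist_0_eq_abs, abs_of_nonneg (ha _)]
  linarith [hdecay m, hM m (by omega)]

theorem tendsto_zero_of_tendsto_sub_mul {z : ℂ} (hz : ‖z‖ < 1) {e : ℕ → ℂ}
    (he : Tendsto (fun n => e (n + 1) - z * e n) atTop (𝓝 0)) : Tendsto e atTop (𝓝 0) := by
  refine tendsto_zero_iff_norm_tendsto_zero.2 <|
    tendsto_zero_of_le_mul_add (norm_nonneg z) hz (fun n => norm_nonneg _) (fun n => ?_)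
      (tendsto_zero_iff_norm_tendsto_zero.1 he)
  calc ‖e (n + 1)‖ = ‖z * e n + (e (n + 1) - z * e n)‖ := by ring_nf
    _ ≤ ‖z‖ * ‖e n‖ + ‖e (n + 1) - z * e n‖ := (norm_add_le _ _).trans_eq (by rw [norm_mul])

section CommSemiring

variable (R : Type*) [CommSemiring R]

noncomputable def seqShift : Module.End R (ℕ → R) := LinearMap.funLeft R R Nat.succ

variable {R}

theorem seqShift_apply (x : ℕ → R) (n : ℕ) : seqShift R x n = x (n + 1) := rfl

theorem seqShift_pow_apply (i : ℕ) (x : ℕ → R) (n : ℕ) : (seqShift R ^ i) x n = x (n + i) := by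
  induction i generalizing n with
  | zero => rfl
  | succ i ih =>
    rw [pow_succ', Module.End.mul_apply]
    exact (ih (n + 1)).trans (congrArg x (by omega))

theorem aeval_seqShift_apply (p : R[X]) (x : ℕ → R) (n : ℕ) :
    aeval (seqShift R) p x n = ∑ i ∈ range (p.natDegree + 1), p.coeff i * x (n + i) := by
  simp [aeval_eq_sum_range, seqShift_pow_apply]

theorem aeval_seqShift_pow (p : R[X]) (γ : R) :
    aeval (seqShift R) p (fun n => γ ^ n) = fun n => p.eval γ * γ ^ n := by
  ext n
  rw [aeval_seqShift_apply, eval_eq_sum_range, Finset.sum_mul]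
  exact Finset.sum_congr rfl fun i _ => by ring

end CommSemiring

section CommRing

variable {R : Type*} [CommRing R]

theorem aeval_seqShift_X_sub_C (γ : R) (x : ℕ → R) :
    aeval (seqShift R) (X - C γ) x = fun n => x (n + 1) - γ * x n := by
  ext n
  simp [seqShift_apply]

theorem aeval_seqShift_apply_eq_pow_mul {p r : R[X]} {γ : R} (hpr : (X - C γ) * r = p)
    {x : ℕ → R} (hx : aeval (seqShift R) p x = 0) (n : ℕ) :
    aeval (seqShift R) r x n = γ ^ n * aeval (seqShift R) r x 0 := by
  have hrec := congrFun (aeval_seqShift_X_sub_C γ (aeval (seqShift R) r x))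
  rw [← Module.End.mul_apply, ← map_mul, hpr, hx] at hrec
  simp only [Pi.zero_apply] at hrec
  induction n with
  | zero => simp
  | succ n ih =>
    rw [pow_succ', mul_assoc, ← ih]
    linear_combination -hrec n

theorem aeval_seqShift_apply_zero_of_monic {r : R[X]} (hr : r.Monic) {x : ℕ → R}
    (hx₀ : ∀ i < r.natDegree, x i = 0) (hx₁ : x r.natDegree = 1) :
    aeval (seqShift R) r x 0 = 1 := by
  rw [aeval_seqShift_apply, sum_range_succ, Finset.sum_eq_zero fun i hi => by
    rw [zero_add, hx₀ i (Finset.mem_range.1 hi), mul_zero]]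
  simp [hx₁, hr.coeff_natDegree]

end CommRing

theorem tendsto_zero_of_aeval_seqShift_prod_X_sub_C (s : Multiset ℂ) (hs : ∀ z ∈ s, ‖z‖ < 1)
    {e : ℕ → ℂ} (he : Tendsto (aeval (seqShift ℂ) (s.map fun z => X - C z).prod e) atTop (𝓝 0)) :
    Tendsto e atTop (𝓝 0) := by
  induction s using Multiset.induction_on generalizing e with
  | empty => simpa using he
  | cons a s ih =>
    rw [Multiset.map_cons, Multiset.prod_cons, map_mul, Module.End.mul_apply] at he
    refine ih (fun z hz => hs z (Multiset.mem_cons_of_mem hz)) ?_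
    refine tendsto_zero_of_tendsto_sub_mul (hs a (Multiset.mem_cons_self a s)) ?_
    rwa [aeval_seqShift_X_sub_C] at he

theorem tendsto_zero_of_aeval_seqShift {p : ℂ[X]} (hp : p ≠ 0) (hroots : ∀ z ∈ p.roots, ‖z‖ < 1)
    {e : ℕ → ℂ} (he : Tendsto (aeval (seqShift ℂ) p e) atTop (𝓝 0)) : Tendsto e atTop (𝓝 0) := by
  refine tendsto_zero_of_aeval_seqShift_prod_X_sub_C p.roots hroots ?_
  rw [← C_leadingCoeff_mul_prod_multiset_X_sub_C (p := p) IsAlgClosed.card_roots_eq_natDegree,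
    map_mul, aeval_C, Module.End.mul_apply] at he
  have := he.const_mul p.leadingCoeff⁻¹
  simpa [Algebra.algebraMap_eq_smul_one, leadingCoeff_ne_zero.2 hp] using this

theorem tendsto_zero_of_aeval_seqShift_of_real {p : ℝ[X]} (hp : p ≠ 0)
    (hroots : ∀ z : ℂ, aeval z p = 0 → ‖z‖ < 1) {x : ℕ → ℝ}
    (hx : Tendsto (aeval (seqShift ℝ) p x) atTop (𝓝 0)) : Tendsto x atTop (𝓝 0) := by
  have hmap : aeval (seqShift ℂ) (p.map (algebraMap ℝ ℂ)) (fun n => (x n : ℂ)) =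
      fun n => (aeval (seqShift ℝ) p x n : ℂ) := by
    ext n
    rw [aeval_seqShift_apply, aeval_seqShift_apply, natDegree_map]
    simp
  have hpℂ : p.map (algebraMap ℝ ℂ) ≠ 0 :=
    (Polynomial.map_ne_zero_iff (algebraMap ℝ ℂ).injective).2 hp
  have := tendsto_zero_of_aeval_seqShift hpℂ
    (fun z hz => hroots z (by rwa [mem_roots_map hp, ← aeval_def] at hz))
    (e := fun n => (x n : ℂ)) <| by
      rw [hmap]
      simpa [Function.comp_def] using (Complex.continuous_ofReal.tendsto 0).comp hx
  simpa [Function.comp_def] using (Complex.continuous_re.tendsto 0).comp this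

theorem eval_ne_zero_of_roots_norm_lt_one {r : ℝ[X]} (hroots : ∀ z : ℂ, aeval z r = 0 → ‖z‖ < 1)
    {γ : ℝ} (hγ : 1 ≤ |γ|) : r.eval γ ≠ 0 := fun h => by
  have := hroots γ <| by
    rw [← Complex.coe_algebraMap, aeval_algebraMap_apply_eq_algebraMap_eval, h, map_zero]
  rw [Complex.norm_real, Real.norm_eq_abs] at this
  linarith

theorem tendsto_sub_pow_div_eval {p r : ℝ[X]} {γ : ℝ} (hpr : (X - C γ) * r = p) (hr : r.Monic)
    (hroots : ∀ z : ℂ, aeval z r = 0 → ‖z‖ < 1) (hγ : 1 ≤ |γ|) {x : ℕ → ℝ}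
    (hx : aeval (seqShift ℝ) p x = 0) (hx₀ : ∀ i < r.natDegree, x i = 0)
    (hx₁ : x r.natDegree = 1) :
    Tendsto (fun n => x n - γ ^ n / r.eval γ) atTop (𝓝 0) := by
  have hrγ := eval_ne_zero_of_roots_norm_lt_one hroots hγ
  have hw := aeval_seqShift_apply_eq_pow_mul hpr hx
  rw [aeval_seqShift_apply_zero_of_monic hr hx₀ hx₁] at hw
  have hsub : (fun n => x n - γ ^ n / r.eval γ) = x - (r.eval γ)⁻¹ • fun n => γ ^ n := by
    ext n
    simp [div_eq_inv_mul]
  refine tendsto_zero_of_aeval_seqShift_of_real hr.ne_zero hroots ?_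
  rw [hsub, map_sub, map_smul, aeval_seqShift_pow]
  convert tendsto_const_nhds (x := (0 : ℝ)) using 1
  ext n
  simp [hw, hrγ]

theorem norm_le_one_of_aeval_eq_zero_of_coeff_mono {p : ℝ[X]} (hp : p ≠ 0) (h₀ : 0 ≤ p.coeff 0)
    (hmono : ∀ i < p.natDegree, p.coeff i ≤ p.coeff (i + 1)) {z : ℂ} (hz : aeval z p = 0) :
    ‖z‖ ≤ 1 := by
  set n := p.natDegree
  set a := p.coeff
  by_contra! hz₁
  -- `(z - 1) p(z) = 0`, telescoped
  have hid : (a n : ℂ) * z ^ (n + 1) =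
      a 0 + ∑ i ∈ range n, ((a (i + 1) - a i : ℝ) : ℂ) * z ^ (i + 1) := by
    rw [aeval_eq_sum_range] at hz
    simp only [Complex.real_smul] at hz
    have h1 : ∑ i ∈ range (n + 1), (a i : ℂ) * z ^ (i + 1) = 0 := by
      have := congrArg (z * ·) hz
      simp only [mul_zero, mul_sum] at this
      rw [← this]
      exact sum_congr rfl fun i _ => by ring
    rw [sum_range_succ] at h1
    rw [sum_range_succ'] at hz
    simp only [Complex.ofReal_sub, sub_mul, sum_sub_distrib]
    linear_combination h1 - hz
  have hdiff : ∀ i ∈ range n, 0 ≤ a (i + 1) - a i :=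
    fun i hi => sub_nonneg.2 (hmono i (mem_range.1 hi))
  have htel : a n = a 0 + ∑ i ∈ range n, (a (i + 1) - a i) := by rw [sum_range_sub]; ring
  have hn : 0 ≤ a n := htel ▸ add_nonneg h₀ (sum_nonneg hdiff)
  have hbound : a n * ‖z‖ ^ (n + 1) ≤ a n * ‖z‖ ^ n := by
    calc a n * ‖z‖ ^ (n + 1) = ‖(a n : ℂ) * z ^ (n + 1)‖ := by
          rw [norm_mul, norm_pow, Complex.norm_real, Real.norm_of_nonneg hn]
      _ ≤ a 0 + ∑ i ∈ range n, (a (i + 1) - a i) * ‖z‖ ^ (i + 1) := by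
          rw [hid]
          refine (norm_add_le _ _).trans (add_le_add ?_ ((norm_sum_le _ _).trans ?_))
          · rw [Complex.norm_real, Real.norm_of_nonneg h₀]
          · refine sum_le_sum fun i hi => ?_
            rw [norm_mul, norm_pow, Complex.norm_real, Real.norm_of_nonneg (hdiff i hi)]
      _ ≤ a 0 * ‖z‖ ^ n + ∑ i ∈ range n, (a (i + 1) - a i) * ‖z‖ ^ n := by
          refine add_le_add (le_mul_of_one_le_right h₀ (one_le_pow₀ hz₁.le))
            (sum_le_sum fun i hi => ?_)
          exact mul_le_mul_of_nonneg_left (pow_le_pow_right₀ hz₁.le (mem_range.1 hi)) (hdiff i hi)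
      _ = a n * ‖z‖ ^ n := by rw [htel, ← sum_mul]; ring
  have hpos : 0 < ‖z‖ ^ n := pow_pos (by linarith) n
  rw [pow_succ] at hbound
  have han : a n = 0 :=
    le_antisymm (le_of_not_gt fun ha => by nlinarith [mul_pos (mul_pos ha hpos) (sub_pos.2 hz₁)]) hn
  exact hp (leadingCoeff_eq_zero.1 han)

noncomputable def qkCharPoly (q : ℝ) (k : ℕ) : ℝ[X] :=
  X ^ k - C q * X ^ (k - 1) - ∑ i ∈ range (k - 1), X ^ i

namespace qkCharPoly

section

variable (q : ℝ) {k : ℕ}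

theorem coeff_of_lt {i : ℕ} (hi : i < k - 1) : (qkCharPoly q k).coeff i = -1 := by
  simp [qkCharPoly, coeff_X_pow, hi, hi.ne, (hi.trans_le (Nat.sub_le k 1)).ne]

theorem coeff_self (hk : 1 ≤ k) : (qkCharPoly q k).coeff k = 1 := by
  simp [qkCharPoly, coeff_X_pow, show k ≠ k - 1 by omega]

theorem natDegree_le : (qkCharPoly q k).natDegree ≤ k :=
  natDegree_le_iff_coeff_eq_zero.2 fun i hi => by
    simp [qkCharPoly, coeff_X_pow, hi.ne', show i ≠ k - 1 by omega, show ¬i < k - 1 by omega]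

theorem monic (hk : 1 ≤ k) : (qkCharPoly q k).Monic :=
  monic_of_natDegree_le_of_coeff_eq_one k (natDegree_le q) (coeff_self q hk)

theorem natDegree_eq (hk : 1 ≤ k) : (qkCharPoly q k).natDegree = k :=
  natDegree_eq_of_le_of_coeff_ne_zero (natDegree_le q) (by rw [coeff_self q hk]; exact one_ne_zero)

theorem X_sub_one_mul (hk : 1 ≤ k) :
    (X - 1) * qkCharPoly q k = X ^ (k - 1) * (X ^ 2 - C (q + 1) * X + C (q - 1)) + 1 := by
  obtain ⟨m, rfl⟩ := Nat.exists_eq_add_of_le' hk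
  have := geom_sum_mul (X : ℝ[X]) m
  simp only [qkCharPoly, Nat.add_sub_cancel, C_add, C_sub, C_1]
  linear_combination -this

theorem aeval_seqShift_apply (x : ℕ → ℝ) (n : ℕ) :
    aeval (seqShift ℝ) (qkCharPoly q k) x n =
      x (n + k) - q * x (n + (k - 1)) - ∑ i ∈ range (k - 1), x (n + i) := by
  simp [qkCharPoly, seqShift_pow_apply, Algebra.algebraMap_eq_smul_one]

theorem aeval_seqShift_eq_zero (hk : 1 ≤ k) {F : ℤ → ℝ}
    (hFrec : ∀ n : ℤ, 2 ≤ n → F n = q * F (n - 1) + ∑ i ∈ Icc 2 k, F (n - (i : ℤ))) :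
    aeval (seqShift ℝ) (qkCharPoly q k) (fun m => F ((m : ℤ) + 2 - k)) = 0 := by
  ext m
  have hsum : ∑ i ∈ Icc 2 k, F ((m : ℤ) + 2 - i) =
      ∑ i ∈ range (k - 1), F (((m + i : ℕ) : ℤ) + 2 - k) := by
    refine sum_nbij' (fun i => k - i) (fun i => k - i) ?_ ?_ ?_ ?_ ?_ <;> intro i hi <;>
      simp only [mem_Icc, mem_range] at hi ⊢
    any_goals omega
    congr 1
    push_cast [show i ≤ k by omega]
    ring
  rw [aeval_seqShift_apply, Pi.zero_apply, ← hsum]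
  have := hFrec ((m : ℤ) + 2) (by omega)
  push_cast [Nat.cast_sub hk] at this ⊢
  ring_nf at this ⊢
  linarith

end

variable {q γ : ℝ} {k : ℕ} {Ψ : ℝ[X]}

theorem aeval_ne_zero_of_norm_eq_one (hq : 0 < q) (hk : 2 ≤ k) {z : ℂ} (hz : ‖z‖ = 1) :
    aeval z (qkCharPoly q k) ≠ 0 := by
  intro hΦ
  have hG := congrArg (aeval z) (X_sub_one_mul q (by omega : 1 ≤ k))
  simp only [map_mul, hΦ, mul_zero, map_add, map_pow, map_sub, aeval_X, aeval_C, map_one,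
    Complex.coe_algebraMap] at hG
  have hzz : z * (starRingEnd ℂ) z = 1 := by
    rw [Complex.mul_conj, Complex.normSq_eq_norm_sq, hz]; norm_num
  -- on the unit circle `z⁻¹ = conj z`, so `z² - (q+1) z + (q-1) = z w` with `w` as below
  set w := z + (q - 1) * (starRingEnd ℂ) z - (q + 1)
  have hw : ‖w‖ = 1 := by
    have h : z ^ (k - 1) * (z * w) = -1 := by linear_combination -hG + (q - 1) * z ^ (k - 1) * hzz
    simpa [hz] using congrArg norm h
  have hre : w.re = q * z.re - (q + 1) := by
    simp only [w, Complex.sub_re, Complex.add_re, Complex.mul_re, Complex.ofReal_re, Complex.one_re,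
      Complex.conj_re, Complex.sub_im, Complex.ofReal_im, Complex.one_im, sub_self, Complex.conj_im,
      mul_neg, zero_mul, neg_zero, sub_zero]
    ring
  have hre₁ : z.re = 1 := by
    have := Complex.abs_re_le_norm w
    rw [hw, hre, abs_le] at this
    nlinarith [Complex.re_le_norm z]
  have hz₁ : z = 1 := by
    have := Complex.normSq_eq_norm_sq z
    rw [Complex.normSq_apply, hz, hre₁] at this
    exact Complex.ext hre₁ (by simpa using (by nlinarith : z.im * z.im = 0))
  rw [hz₁] at hΦ
  have hΦ₁ : (1 : ℝ) - q - ((k - 1 : ℕ) : ℝ) = 0 := by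
    simpa [qkCharPoly] using congrArg Complex.re hΦ
  have hk₁ : (1 : ℝ) ≤ ((k - 1 : ℕ) : ℝ) := by exact_mod_cast (by omega : 1 ≤ k - 1)
  linarith

theorem cofactor_monic (hk : 1 ≤ k) (hΨ : (X - C γ) * Ψ = qkCharPoly q k) : Ψ.Monic :=
  (monic_X_sub_C γ).of_mul_monic_left (hΨ ▸ monic q hk)

theorem cofactor_natDegree (hk : 1 ≤ k) (hΨ : (X - C γ) * Ψ = qkCharPoly q k) :
    Ψ.natDegree = k - 1 := by
  have := (monic_X_sub_C γ).natDegree_mul (cofactor_monic hk hΨ)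
  rw [hΨ, natDegree_eq q hk, natDegree_X_sub_C] at this
  omega

theorem cofactor_coeff_zero (hk : 2 ≤ k) (hΨ : (X - C γ) * Ψ = qkCharPoly q k) :
    γ * Ψ.coeff 0 = 1 := by
  have := congrArg (coeff · 0) hΨ
  simp only [mul_coeff_zero, coeff_sub, coeff_X_zero, coeff_C_zero,
    coeff_of_lt q (by omega : 0 < k - 1)] at this
  linarith

theorem cofactor_coeff_succ {i : ℕ} (hi : i + 1 < k - 1) (hΨ : (X - C γ) * Ψ = qkCharPoly q k) :
    γ * Ψ.coeff (i + 1) = Ψ.coeff i + 1 := by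
  have := congrArg (coeff · (i + 1)) hΨ
  simp only [mul_comm (X - C γ), coeff_mul_X_sub_C, coeff_of_lt q hi] at this
  linarith

theorem cofactor_coeff_pos_and_le (hγ : 1 < γ) (hk : 2 ≤ k) (hΨ : (X - C γ) * Ψ = qkCharPoly q k)
    {i : ℕ} (hi : i < k - 1) : 0 < Ψ.coeff i ∧ (γ - 1) * Ψ.coeff i ≤ 1 := by
  induction i with
  | zero =>
    have := cofactor_coeff_zero hk hΨ
    constructor <;> nlinarith
  | succ i ih =>
    obtain ⟨hpos, hle⟩ := ih (by omega)
    have := cofactor_coeff_succ hi hΨ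
    constructor <;> nlinarith

theorem norm_lt_one_of_aeval_cofactor_eq_zero (hq : 0 < q) (hγ : 2 ≤ γ) (hk : 2 ≤ k)
    (hΨ : (X - C γ) * Ψ = qkCharPoly q k) {z : ℂ} (hz : aeval z Ψ = 0) : ‖z‖ < 1 := by
  have hmonic := cofactor_monic (by omega) hΨ
  have hdeg := cofactor_natDegree (by omega) hΨ
  have hmono : ∀ i < Ψ.natDegree, Ψ.coeff i ≤ Ψ.coeff (i + 1) := by
    intro i hi
    rw [hdeg] at hi
    obtain ⟨hpos, hle⟩ := cofactor_coeff_pos_and_le (by linarith) hk hΨ hi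
    rcases (show i + 1 ≤ k - 1 from hi).lt_or_eq with h | h
    · nlinarith [cofactor_coeff_succ h hΨ]
    · rw [h, ← hdeg, hmonic.coeff_natDegree]
      nlinarith
  refine (norm_le_one_of_aeval_eq_zero_of_coeff_mono hmonic.ne_zero
    (cofactor_coeff_pos_and_le (by linarith) hk hΨ (by omega)).1.le hmono hz).lt_of_ne fun h => ?_
  exact aeval_ne_zero_of_norm_eq_one hq hk h (by rw [← hΨ, map_mul, hz, mul_zero])

theorem sub_one_mul_eval_cofactor (hk : 2 ≤ k) (hΨ : (X - C γ) * Ψ = qkCharPoly q k) :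
    (γ - 1) * Ψ.eval γ =
      γ ^ (k - 2) * ((k + 1) * γ ^ 2 - (q + 1) * k * γ + (q - 1) * (k - 1)) := by
  have h := congrArg (fun p => (derivative p).eval γ) (X_sub_one_mul q (by omega : 1 ≤ k))
  obtain ⟨m, rfl⟩ := Nat.exists_eq_add_of_le' hk
  rw [← hΨ] at h
  simp only [derivative_mul, derivative_X, derivative_one, sub_zero, one_mul,
    derivative_C, eval_add, eval_mul, eval_sub, eval_X, eval_C, sub_self, zero_mul, eval_one,
    add_zero, zero_add, Nat.add_one_sub_one, map_add, map_one, map_sub,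
    derivative_X_pow_succ, map_natCast, Nat.cast_one, pow_one, mul_one, eval_natCast, eval_pow] at h
  rw [h, Nat.add_sub_cancel]
  push_cast
  ring

end qkCharPoly

theorem qk_fib_error_tendsto_zero_general
    (q : ℤ) (k : ℕ) (hq : 3 ≤ q) (hk : 2 ≤ k)
    (F : ℤ → ℝ)
    (hF0 : ∀ n : ℤ, 2 - (k : ℤ) ≤ n → n ≤ 0 → F n = 0)
    (hF1 : F 1 = 1)
    (hFrec : ∀ n : ℤ, 2 ≤ n →
      F n = (q : ℝ) * F (n - 1) + ∑ i ∈ Finset.Icc 2 k, F (n - (i : ℤ)))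
    (γ : ℝ)
    (hγ_lb : (q : ℝ) < γ)
    (hγ_root : γ ^ k - (q : ℝ) * γ ^ (k - 1) - ∑ i ∈ Finset.range (k - 1), γ ^ i = 0)
    (g : ℝ → ℝ)
    (hg : ∀ x : ℝ, g x = (x - 1) /
      (((k : ℝ) + 1) * x ^ 2 - ((q : ℝ) + 1) * (k : ℝ) * x + ((q : ℝ) - 1) * ((k : ℝ) - 1))) :
    Filter.Tendsto (fun n : ℕ => F (n : ℤ) - g γ * γ ^ n) Filter.atTop (nhds 0) := by
  have hq₃ : (3 : ℝ) ≤ q := by exact_mod_cast hq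
  have hγ₁ : 1 ≤ |γ| := by rw [abs_of_pos (by linarith)]; linarith
  have hΨ : (X - C γ) * (qkCharPoly q k /ₘ (X - C γ)) = qkCharPoly q k :=
    mul_divByMonic_eq_iff_isRoot.2 (by simpa [qkCharPoly, eval_finsetSum] using hγ_root)
  set Ψ := qkCharPoly q k /ₘ (X - C γ)
  have hroots (z : ℂ) : aeval z Ψ = 0 → ‖z‖ < 1 :=
    qkCharPoly.norm_lt_one_of_aeval_cofactor_eq_zero (by linarith) (by linarith) hk hΨ
  have hdeg := qkCharPoly.cofactor_natDegree (by omega) hΨ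
  have hlim := tendsto_sub_pow_div_eval hΨ (qkCharPoly.cofactor_monic (by omega) hΨ) hroots hγ₁
    (qkCharPoly.aeval_seqShift_eq_zero (q : ℝ) (by omega) hFrec)
    (fun i hi => hF0 _ (by omega) (by omega)) (by rw [hdeg, ← hF1]; congr 1; omega)
  have hgγ : g γ = γ ^ (k - 2) / Ψ.eval γ := by
    have hΨγ := eval_ne_zero_of_roots_norm_lt_one hroots hγ₁
    have hid := qkCharPoly.sub_one_mul_eval_cofactor hk hΨ
    refine (hg γ).trans ((div_eq_div_iff (fun hD => ?_) hΨγ).2 (by linarith))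
    rw [hD, mul_zero, mul_eq_zero, sub_eq_zero] at hid
    exact hid.elim (fun h => by linarith) hΨγ
  refine (hlim.comp (tendsto_add_atTop_nat (k - 2))).congr fun n => ?_
  simp only [Function.comp_apply, pow_add, hgγ]
  rw [show ((n + (k - 2) : ℕ) : ℤ) + 2 - k = n by omega]
  ring

/-- For integers `q ≥ 3` and `k ≥ 2`, with `γ` the dominant root of
`Φ_{q,k}` (its unique real root in `(q, q+1)`), the error
`E n = F n − g(γ)·γ^n` tends to `0` as `n → ∞`. -/
theorem qk_fib_error_tendsto_zero
    (q : ℤ) (k : ℕ) (hq : 3 ≤ q) (hk : 2 ≤ k)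
    (F : ℤ → ℝ)
    (hF0 : ∀ n : ℤ, 2 - (k : ℤ) ≤ n → n ≤ 0 → F n = 0)
    (hF1 : F 1 = 1)
    (hFrec : ∀ n : ℤ, 2 ≤ n →
      F n = (q : ℝ) * F (n - 1) + ∑ i ∈ Finset.Icc 2 k, F (n - (i : ℤ)))
    (γ : ℝ)
    (hγ_lb : (q : ℝ) < γ) (hγ_ub : γ < (q : ℝ) + 1)
    (hγ_root : γ ^ k - (q : ℝ) * γ ^ (k - 1) - ∑ i ∈ Finset.range (k - 1), γ ^ i = 0)
    (g : ℝ → ℝ)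
    (hg : ∀ x : ℝ, g x = (x - 1) /
      (((k : ℝ) + 1) * x ^ 2 - ((q : ℝ) + 1) * (k : ℝ) * x + ((q : ℝ) - 1) * ((k : ℝ) - 1))) :
    Filter.Tendsto (fun n : ℕ => F (n : ℤ) - g γ * γ ^ n) Filter.atTop (nhds 0) :=
  qk_fib_error_tendsto_zero_general q k hq hk F hF0 hF1 hFrec γ hγ_lb hγ_root g hg
end

section
/- Let q ≥ 3 and k ≥ 2 be integers, and let γ be the dominant root of Φ_{q,k}, i.e. the unique real root of Φ_{q,k}(t) = t^k − q t^{k−1} − t^{k−2} − ⋯ − t − 1 in (q, q+1). Then for all integers n ≥ −(k−2), |F^{(k)}_{q,n} − g_{q,k}(γ)·γ^n| ≤ 1/q, where g_{q,k}(x) = (x−1)/((k+1)x² − (q+1)kx + (q−1)(k−1)). -/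
/-!
Write `E n = F n - c γ ^ n` with `c = g γ`. As `Φ(γ) = 0`, `(t - 1) Φ(t) = (t - γ) R(t)` with
`R(t) = t ^ k - (q + 1 - γ) t ^ (k - 1) - ∑_{i=2}^{k} γ ^ (i - k - 1) t ^ (k - i)`, so along any
solution of the `Φ`-recurrence the defect of the `R`-recurrence is multiplied by `γ` at each step.
The value `c = g γ` is exactly the one for which the `R`-defect of `E` vanishes at `n = 2`, so `E`
satisfies the `R`-recurrence. Its coefficients are nonnegative because `q < γ < q + 1` and sum to `1`
because `R(1) = 0`: each `E n` is a convex combination of the `k` preceding values. Hence `|E n|`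
never exceeds its maximum on the window `2 - k ≤ n ≤ 1`, where `E n = -c γ ^ n` for `n ≤ 0` and
`E 1 = 1 - c γ`; Bernoulli's inequality `γ ^ (k - 1) ≥ 1 + (k - 1) (γ - 1)` bounds both by `1 / q`.
-/

open Finset

theorem sum_Icc_pow_mul_sub_mul_sum {R : Type*} [CommRing R] (x : R) (E : ℤ → R) {k : ℕ}
    (hk : 1 ≤ k) (m : ℤ) :
    ∑ i ∈ Icc 2 k, x ^ i * E (m - i) - x * ∑ i ∈ Icc 2 k, x ^ i * E (m - 1 - i) =
      x ^ 2 * E (m - 2) - x ^ (k + 1) * E (m - (k + 1)) := by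
  induction k, hk using Nat.le_induction with
  | base => simp
  | succ k hk ih =>
    rw [sum_Icc_succ_top (by omega), sum_Icc_succ_top (by omega)]
    push_cast
    rw [show m - 1 - ((k : ℤ) + 1) = m - (k + 1 + 1) by ring]
    linear_combination ih

theorem abs_le_of_convex_recurrence {E : ℤ → ℝ} {k : ℕ} {a B : ℝ} {w : ℕ → ℝ} {n₀ : ℤ}
    (hk : 1 ≤ k) (ha : 0 ≤ a) (hw : ∀ i ∈ Icc 2 k, 0 ≤ w i)
    (hsum : a + ∑ i ∈ Icc 2 k, w i = 1)
    (hrec : ∀ m, n₀ + k ≤ m → E m = a * E (m - 1) + ∑ i ∈ Icc 2 k, w i * E (m - i))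
    (hinit : ∀ m, n₀ ≤ m → m < n₀ + k → |E m| ≤ B) :
    ∀ m, n₀ ≤ m → |E m| ≤ B := by
  suffices h : ∀ t : ℕ, |E (n₀ + t)| ≤ B by
    intro m hm
    simpa [Int.toNat_of_nonneg (sub_nonneg.2 hm)] using h (m - n₀).toNat
  intro t
  induction t using Nat.strong_induction_on with
  | _ t ih =>
    have ih' : ∀ j, n₀ ≤ j → j < n₀ + t → |E j| ≤ B := fun j hj hjt => by
      simpa [Int.toNat_of_nonneg (sub_nonneg.2 hj)] using ih (j - n₀).toNat (by omega)
    rcases lt_or_ge (t : ℤ) k with ht | ht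
    · exact hinit _ (by omega) (by omega)
    rw [hrec _ (by omega)]
    calc |a * E (n₀ + t - 1) + ∑ i ∈ Icc 2 k, w i * E (n₀ + t - i)|
        ≤ a * |E (n₀ + t - 1)| + ∑ i ∈ Icc 2 k, w i * |E (n₀ + t - i)| := by
          refine (abs_add_le _ _).trans (add_le_add ?_ ((abs_sum_le_sum_abs _ _).trans ?_))
          · rw [abs_mul, abs_of_nonneg ha]
          · exact sum_le_sum fun i hi => by rw [abs_mul, abs_of_nonneg (hw i hi)]
      _ ≤ a * B + ∑ i ∈ Icc 2 k, w i * B := by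
          gcongr with i hi
          · exact ih' _ (by omega) (by omega)
          · exact hw i hi
          · exact ih' _ (by simp only [mem_Icc] at hi; omega) (by simp only [mem_Icc] at hi; omega)
      _ = B := by rw [← sum_mul, ← add_mul, hsum, one_mul]

namespace QKFib

variable (q : ℝ) (k : ℕ)

def phi (t : ℝ) : ℝ := t ^ k - q * t ^ (k - 1) - ∑ i ∈ range (k - 1), t ^ i

def phiDefect (E : ℤ → ℝ) (m : ℤ) : ℝ := E m - q * E (m - 1) - ∑ i ∈ Icc 2 k, E (m - i)

/-- The defect of the recurrence with characteristic polynomial `(t - 1) Φ(t) / (t - γ)`. -/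
noncomputable def reducedDefect (γ : ℝ) (E : ℤ → ℝ) (m : ℤ) : ℝ :=
  E m - (q + 1 - γ) * E (m - 1) - ∑ i ∈ Icc 2 k, γ ^ i / γ ^ (k + 1) * E (m - i)

/-- `x ^ (k - 2) * gDenom q k x` is the derivative of `(t - 1) Φ(t)` at `x`. -/
def gDenom (x : ℝ) : ℝ := (k + 1) * x ^ 2 - (q + 1) * k * x + (q - 1) * (k - 1)

variable {q k} {γ : ℝ}

theorem pow_pred_mul_eq_neg_one_of_phi_eq_zero (hk : 1 ≤ k) (hγ : phi q k γ = 0) :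
    γ ^ (k - 1) * (γ ^ 2 - (q + 1) * γ + q - 1) = -1 := by
  obtain ⟨k, rfl⟩ := Nat.exists_eq_add_of_le hk
  simp only [phi, add_tsub_cancel_left] at hγ ⊢
  linear_combination (γ - 1) * hγ + geom_sum_mul γ k

theorem reducedDefect_sub_const_mul (E G : ℤ → ℝ) (c : ℝ) (m : ℤ) :
    reducedDefect q k γ (fun n => E n - c * G n) m =
      reducedDefect q k γ E m - c * reducedDefect q k γ G m := by
  simp only [reducedDefect, mul_sub, sum_sub_distrib, mul_sum, mul_left_comm c]
  ring

variable {F : ℤ → ℝ}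

theorem phiDefect_eq_zero (hFrec : ∀ n : ℤ, 2 ≤ n → F n = q * F (n - 1) + ∑ i ∈ Icc 2 k, F (n - i))
    (n : ℤ) (hn : 2 ≤ n) : phiDefect q k F n = 0 := by
  rw [phiDefect, hFrec n hn]
  ring

theorem reducedDefect_two (hF0 : ∀ n : ℤ, 2 - (k : ℤ) ≤ n → n ≤ 0 → F n = 0) (hF1 : F 1 = 1)
    (hFrec : ∀ n : ℤ, 2 ≤ n → F n = q * F (n - 1) + ∑ i ∈ Icc 2 k, F (n - i)) :
    reducedDefect q k γ F 2 = γ - 1 := by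
  have hsum : ∀ i ∈ Icc 2 k, F (2 - i) = 0 := fun i hi => by
    simp only [mem_Icc] at hi
    exact hF0 _ (by omega) (by omega)
  have hF2 := hFrec 2 le_rfl
  rw [sum_eq_zero hsum] at hF2
  rw [reducedDefect, sum_eq_zero fun i hi => by rw [hsum i hi, mul_zero]]
  rw [hF2, show (2 : ℤ) - 1 = 1 by norm_num, hF1]
  ring

section Root

variable (hroot : γ ^ (k - 1) * (γ ^ 2 - (q + 1) * γ + q - 1) = -1)
include hroot

theorem reducedDefect_sub_mul_eq_phiDefect_sub (hγ : γ ≠ 0) (hk : 1 ≤ k) (E : ℤ → ℝ) (m : ℤ) :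
    reducedDefect q k γ E m - γ * reducedDefect q k γ E (m - 1) =
      phiDefect q k E m - phiDefect q k E (m - 1) := by
  have hγ' := sum_Icc_pow_mul_sub_mul_sum γ E hk m
  have h1 := sum_Icc_pow_mul_sub_mul_sum 1 E hk m
  simp only [one_pow, one_mul] at h1
  simp only [reducedDefect, phiDefect, div_mul_eq_mul_div, ← sum_div]
  rw [show m - 1 - 1 = m - 2 by ring]
  field_simp
  obtain ⟨k, rfl⟩ := Nat.exists_eq_add_of_le' hk
  rw [Nat.add_sub_cancel] at hroot
  linear_combination (-1) * hγ' + γ ^ (k + 1 + 1) * h1 - γ ^ 2 * E (m - 2) * hroot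

theorem add_sum_pow_div_eq_one (hγ₀ : γ ≠ 0) (hγ₁ : γ ≠ 1) (hk : 1 ≤ k) :
    q + 1 - γ + ∑ i ∈ Icc 2 k, γ ^ i / γ ^ (k + 1) = 1 := by
  -- `R(1) = 0`, read off from the constant sequence `1`
  have h := reducedDefect_sub_mul_eq_phiDefect_sub hroot hγ₀ hk (fun _ => 1) 0
  simp only [reducedDefect, phiDefect, mul_one, sub_self] at h
  have h' : (1 - γ) * (1 - (q + 1 - γ) - ∑ i ∈ Icc 2 k, γ ^ i / γ ^ (k + 1)) = 0 := by
    linear_combination h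
  linarith [(mul_eq_zero.1 h').resolve_left (sub_ne_zero.2 hγ₁.symm)]

theorem reducedDefect_zpow (hγ : γ ≠ 0) (hk : 1 ≤ k) (m : ℤ) :
    reducedDefect q k γ (fun n => γ ^ n) m = γ ^ (m - 2) * gDenom q k γ := by
  have hterm : ∀ i ∈ Icc 2 k, γ ^ i / γ ^ (k + 1) * γ ^ (m - i) = γ ^ (m - 2) / γ ^ (k - 1) := by
    intro i _
    rw [← zpow_natCast, ← zpow_natCast γ (k + 1), ← zpow_natCast γ (k - 1), ← zpow_sub₀ hγ,
      ← zpow_add₀ hγ, ← zpow_sub₀ hγ]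
    push_cast [Nat.cast_sub hk]
    ring_nf
  have hinv : (γ ^ (k - 1))⁻¹ = -(γ ^ 2 - (q + 1) * γ + q - 1) :=
    inv_eq_of_mul_eq_one_right (by linear_combination -hroot)
  have h₁ : γ ^ (m - 1) = γ ^ (m - 2) * γ := by rw [← zpow_add_one₀ hγ]; ring_nf
  have h₂ : γ ^ m = γ ^ (m - 2) * γ ^ 2 := by rw [← zpow_natCast, ← zpow_add₀ hγ]; ring_nf
  rw [reducedDefect, sum_congr rfl hterm, sum_const, Nat.card_Icc, nsmul_eq_mul, div_eq_mul_inv,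
    hinv, gDenom, show k + 1 - 2 = k - 1 by omega, Nat.cast_sub hk, h₁, h₂]
  push_cast
  ring

theorem reducedDefect_eq_zpow_mul (hγ : γ ≠ 0) (hk : 1 ≤ k) {E : ℤ → ℝ} {n₀ : ℤ}
    (hE : ∀ n, n₀ ≤ n → phiDefect q k E n = 0) :
    ∀ m, n₀ ≤ m → reducedDefect q k γ E m = γ ^ (m - n₀) * reducedDefect q k γ E n₀ := by
  refine Int.leInduction (by simp) fun m hm ih => ?_
  have h := reducedDefect_sub_mul_eq_phiDefect_sub hroot hγ hk E (m + 1)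
  rw [add_sub_cancel_right, hE _ (by omega), hE m hm, ih] at h
  rw [show m + 1 - n₀ = m - n₀ + 1 by ring, zpow_add_one₀ hγ]
  linear_combination h

theorem gDenom_sub_mul_mul_pow :
    (gDenom q k γ - γ * (γ - 1)) * γ ^ (k - 1) = γ * (γ - q) * γ ^ (k - 1) - (k - 1) := by
  rw [gDenom]
  linear_combination (k - 1 : ℝ) * hroot

theorem gDenom_sub_mul_nonneg (hk : 1 ≤ k) (hγ : 1 < γ) : 0 ≤ gDenom q k γ - γ * (γ - 1) := by
  have hP : 0 < γ ^ (k - 1) * (γ - 1) := by positivity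
  have hbernoulli : 1 + ((k - 1 : ℕ) : ℝ) * (γ - 1) ≤ γ ^ (k - 1) := by
    simpa using one_add_mul_le_pow (by linarith : (-2 : ℝ) ≤ γ - 1) (k - 1)
  rw [Nat.cast_sub hk, Nat.cast_one] at hbernoulli
  have hP₁ : 0 ≤ γ ^ (k - 1) - 1 := sub_nonneg.2 (one_le_pow₀ hγ.le)
  have key : (gDenom q k γ - γ * (γ - 1)) * (γ ^ (k - 1) * (γ - 1)) =
      γ * (γ ^ (k - 1) - 1) - (k - 1) * (γ - 1) := by
    linear_combination (γ - 1) * gDenom_sub_mul_mul_pow hroot + γ * hroot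
  refine nonneg_of_mul_nonneg_left ?_ hP
  nlinarith [mul_nonneg (sub_nonneg.2 hγ.le) hP₁]

theorem gDenom_sub_mul_le (hk : 1 ≤ k) (hγ : 0 < γ) :
    gDenom q k γ - γ * (γ - 1) ≤ γ * (γ - q) := by
  have hk' : (1 : ℝ) ≤ k := by exact_mod_cast hk
  refine le_of_mul_le_mul_right ?_ (pow_pos hγ (k - 1))
  linarith [gDenom_sub_mul_mul_pow hroot]

theorem gDenom_pos (hk : 1 ≤ k) (hγ : 1 < γ) : 0 < gDenom q k γ := by
  nlinarith [gDenom_sub_mul_nonneg hroot hk hγ]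

theorem reducedDefect_sub_mul_zpow_eq_zero (hγ : γ ≠ 0) (hk : 1 ≤ k)
    (hF0 : ∀ n : ℤ, 2 - (k : ℤ) ≤ n → n ≤ 0 → F n = 0) (hF1 : F 1 = 1)
    (hFrec : ∀ n : ℤ, 2 ≤ n → F n = q * F (n - 1) + ∑ i ∈ Icc 2 k, F (n - i))
    {c : ℝ} (hc : c * gDenom q k γ = γ - 1) (m : ℤ) (hm : 2 ≤ m) :
    reducedDefect q k γ (fun n => F n - c * γ ^ n) m = 0 := by
  rw [reducedDefect_sub_const_mul, reducedDefect_zpow hroot hγ hk,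
    reducedDefect_eq_zpow_mul hroot hγ hk (phiDefect_eq_zero hFrec) m hm,
    reducedDefect_two hF0 hF1 hFrec, ← hc]
  ring

theorem abs_sub_mul_zpow_le_of_le_one (hq : 1 ≤ q) (hqγ : q < γ) (hγq : γ < q + 1) (hk : 1 ≤ k)
    (hF0 : ∀ n : ℤ, 2 - (k : ℤ) ≤ n → n ≤ 0 → F n = 0) (hF1 : F 1 = 1)
    {c : ℝ} (hc : c = (γ - 1) / gDenom q k γ) (m : ℤ) (hm₀ : 2 - (k : ℤ) ≤ m) (hm₁ : m ≤ 1) :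
    |F m - c * γ ^ m| ≤ 1 / q := by
  have hγ : 1 < γ := by linarith
  have hX₀ := gDenom_sub_mul_nonneg hroot hk hγ
  have hX₁ := gDenom_sub_mul_le hroot hk (by linarith)
  have hd := gDenom_pos hroot hk hγ
  have hc₀ : 0 ≤ c := hc ▸ div_nonneg (by linarith) hd.le
  have hcd : c * gDenom q k γ = γ - 1 := by rw [hc, div_mul_cancel₀ _ hd.ne']
  have hcγ : c * γ ≤ 1 := by
    refine le_of_mul_le_mul_right ?_ hd
    linear_combination γ * hcd + hX₀
  have hcγ' : q * (1 - c * γ) ≤ 1 := by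
    have hγq' : γ * (γ - q) ≤ γ := by nlinarith
    have := mul_le_mul_of_nonneg_left (hX₁.trans hγq') (by linarith : 0 ≤ q - 1)
    refine le_of_mul_le_mul_right ?_ hd
    nlinarith
  rcases hm₁.lt_or_eq with hm | rfl
  · rw [hF0 m hm₀ (by omega), zero_sub, abs_neg, abs_of_nonneg (by positivity)]
    calc c * γ ^ m ≤ c := mul_le_of_le_one_right hc₀ (zpow_le_one_of_nonpos₀ hγ.le (by omega))
      _ ≤ 1 / γ := by rw [le_div_iff₀ (by linarith)]; exact hcγ
      _ ≤ 1 / q := one_div_le_one_div_of_le (by linarith) hqγ.le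
  · rw [hF1, zpow_one, abs_of_nonneg (by linarith), le_div_iff₀ (by linarith)]
    linarith

end Root

end QKFib

open QKFib in
/-- For integers `q ≥ 3` and `k ≥ 2`, with `γ` the dominant root of
`Φ_{q,k}` (its unique real root in `(q, q+1)`), one has
`|F n − g(γ)·γ^n| ≤ 1/q` for all integers `n ≥ −(k−2)`. -/
theorem qk_fib_error_bound
    (q : ℤ) (k : ℕ) (hq : 3 ≤ q) (hk : 2 ≤ k)
    (F : ℤ → ℝ)
    (hF0 : ∀ n : ℤ, 2 - (k : ℤ) ≤ n → n ≤ 0 → F n = 0)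
    (hF1 : F 1 = 1)
    (hFrec : ∀ n : ℤ, 2 ≤ n →
      F n = (q : ℝ) * F (n - 1) + ∑ i ∈ Finset.Icc 2 k, F (n - (i : ℤ)))
    (γ : ℝ)
    (hγ_lb : (q : ℝ) < γ) (hγ_ub : γ < (q : ℝ) + 1)
    (hγ_root : γ ^ k - (q : ℝ) * γ ^ (k - 1) - ∑ i ∈ Finset.range (k - 1), γ ^ i = 0)
    (g : ℝ → ℝ)
    (hg : ∀ x : ℝ, g x = (x - 1) /
      (((k : ℝ) + 1) * x ^ 2 - ((q : ℝ) + 1) * (k : ℝ) * x + ((q : ℝ) - 1) * ((k : ℝ) - 1))) :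
    ∀ n : ℤ, 2 - (k : ℤ) ≤ n → |F n - g γ * γ ^ n| ≤ 1 / (q : ℝ) := by
  have hq₁ : (1 : ℝ) ≤ q := by exact_mod_cast (by omega : 1 ≤ q)
  have hk₁ : 1 ≤ k := by omega
  have hγ₀ : 0 < γ := by linarith
  have hroot := pow_pred_mul_eq_neg_one_of_phi_eq_zero hk₁ hγ_root
  have hc : g γ = (γ - 1) / gDenom q k γ := hg γ
  have hd := gDenom_pos hroot hk₁ (by linarith)
  refine abs_le_of_convex_recurrence hk₁ (by linarith) (fun i _ => by positivity)
    (add_sum_pow_div_eq_one hroot hγ₀.ne' (by linarith) hk₁) (fun m hm => ?_)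
    (fun m hm₀ hm₁ => abs_sub_mul_zpow_le_of_le_one hroot hq₁ hγ_lb hγ_ub hk₁ hF0 hF1 hc m hm₀
      (by omega))
  have := reducedDefect_sub_mul_zpow_eq_zero hroot hγ₀.ne' hk₁ hF0 hF1 hFrec (c := g γ)
    (by rw [hc, div_mul_cancel₀ _ hd.ne']) m (by omega)
  rw [reducedDefect] at this
  linear_combination this
end

section
/- Let q ≥ 3 and k ≥ 2 be integers, and let γ be the dominant root of Φ_{q,k}, i.e. the unique real root of Φ_{q,k}(t) = t^k − q t^{k−1} − t^{k−2} − ⋯ − t − 1 in (q, q+1). Then for all integers n ≥ 1, γ^{n−2} < γ^{n−1}·((q−1)/q) < F^{(k)}_{q,n} < γ^{n−1}·((q+2)/q) < γ^n. -/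
/-!
Induction on `n`, run with the stronger lower bound `F n > b γ^(n-1) + c`, where
`b = (q-1)/q` and `c = 1/(q(q-1))`. Because `n ↦ γ^n` obeys the same recurrence on all of `ℤ`,
both bounds propagate through `F n = q F(n-1) + ∑ F(n-i)`, except that the terms with
`n - i ≤ 0` are `0` rather than about `b γ^(n-1-i)`. Those missing terms are distinct negative
powers of `γ`, so they total at most `1/(γ-1) < 1/(q-1)`, and the loss `b/(q-1) = 1/q` is paid
for by `q c - c = 1/q`. The outer inequalities are `γ⁻¹ < 1/q < (q-1)/q` and
`(q+2)/q < q < γ`, both using `q ≥ 3`.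
-/

open Finset

section OrderedField

variable {K : Type*} [Field K] [LinearOrder K] [IsStrictOrderedRing K]

lemma sum_pow_le_div_one_sub_of_zero_notMem {x : K} (hx0 : 0 ≤ x) (hx1 : x < 1) {t : Finset ℕ}
    (ht : 0 ∉ t) : ∑ j ∈ t, x ^ j ≤ x / (1 - x) := by
  have hsub : t ⊆ Ico 1 (t.sup id + 1) := fun j hj ↦
    mem_Ico.2 ⟨Nat.pos_of_ne_zero (ne_of_mem_of_not_mem hj ht),
      Nat.lt_succ_of_le (le_sup (f := id) hj)⟩
  calc ∑ j ∈ t, x ^ j ≤ ∑ j ∈ Ico 1 (t.sup id + 1), x ^ j :=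
        sum_le_sum_of_subset_of_nonneg hsub fun j _ _ ↦ pow_nonneg hx0 j
    _ ≤ x / (1 - x) := by
        simpa using geom_sum_Ico_le_of_lt_one (m := 1) (n := t.sup id + 1) hx0 hx1

/-- Distinct negative powers of `γ > 1` sum to at most `∑_{j ≥ 1} γ⁻ʲ = 1 / (γ - 1)`. -/
lemma sum_filter_zpow_sub_le_one_div_sub_one {γ : K} (hγ : 1 < γ) (n : ℤ) (s : Finset ℕ) :
    ∑ i ∈ s with n ≤ ((i : ℕ) : ℤ), γ ^ (n - 1 - (i : ℤ)) ≤ 1 / (γ - 1) := by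
  have hγ0 : 0 < γ := by linarith
  set e : ℕ → ℕ := fun i ↦ ((i : ℤ) + 1 - n).toNat
  have he : ∀ i ∈ s.filter (fun i : ℕ ↦ n ≤ i), γ ^ (n - 1 - (i : ℤ)) = γ⁻¹ ^ e i := by
    intro i hi
    have hni := (mem_filter.1 hi).2
    rw [inv_pow, ← zpow_natCast, ← zpow_neg, Int.toNat_of_nonneg (by omega)]
    ring_nf
  have hinj : Set.InjOn e (s.filter (fun i : ℕ ↦ n ≤ i)) := by
    intro i hi j hj hij
    have := (mem_filter.1 hi).2
    have := (mem_filter.1 hj).2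
    simp only [e] at hij
    omega
  rw [sum_congr rfl he, ← sum_image hinj]
  calc ∑ j ∈ (s.filter (fun i : ℕ ↦ n ≤ i)).image e, γ⁻¹ ^ j ≤ γ⁻¹ / (1 - γ⁻¹) := by
        refine sum_pow_le_div_one_sub_of_zero_notMem (by positivity) (inv_lt_one_of_one_lt₀ hγ) ?_
        simp only [mem_image, mem_filter, not_exists, not_and]
        intro i hi he0
        simp only [e] at he0
        omega
    _ = 1 / (γ - 1) := by field_simp

end OrderedField

lemma zpow_eq_mul_zpow_sub_one_add_sum {K : Type*} [Field K] {a γ : K} {k : ℕ} (hk : 1 ≤ k)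
    (hγ : γ ≠ 0) (hroot : γ ^ k - a * γ ^ (k - 1) - ∑ i ∈ range (k - 1), γ ^ i = 0) (n : ℤ) :
    γ ^ n = a * γ ^ (n - 1) + ∑ i ∈ Icc 2 k, γ ^ (n - (i : ℤ)) := by
  have hshift : ∀ {m : ℤ} {j : ℕ}, m = n - k + j → γ ^ m = γ ^ (n - k) * γ ^ j := by
    rintro m j rfl
    rw [zpow_add₀ hγ, zpow_natCast]
  have hsum : ∑ i ∈ Icc 2 k, γ ^ (n - (i : ℤ)) = γ ^ (n - k) * ∑ j ∈ range (k - 1), γ ^ j := by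
    rw [mul_sum]
    refine sum_nbij' (fun i ↦ k - i) (fun j ↦ k - j) ?_ ?_ ?_ ?_ ?_
    all_goals intro i hi; simp only [mem_Icc, mem_range] at hi ⊢
    all_goals first | omega | exact hshift (by omega)
  rw [hsum, hshift (m := n) (j := k) (by ring), hshift (m := n - 1) (j := k - 1) (by omega)]
  linear_combination γ ^ (n - k) * hroot

structure IsGenFibonacci (a : ℝ) (k : ℕ) (F : ℤ → ℝ) : Prop where
  eq_zero : ∀ n : ℤ, 2 - (k : ℤ) ≤ n → n ≤ 0 → F n = 0
  eq_one : F 1 = 1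
  step : ∀ n : ℤ, 2 ≤ n → F n = a * F (n - 1) + ∑ i ∈ Icc 2 k, F (n - (i : ℤ))

namespace IsGenFibonacci

variable {a γ : ℝ} {k : ℕ} {F : ℤ → ℝ}

lemma eq_zero_of_le (hF : IsGenFibonacci a k F) {n : ℤ} {i : ℕ} (hn : 2 ≤ n) (hi : i ∈ Icc 2 k)
    (hni : n ≤ i) : F (n - i) = 0 :=
  hF.eq_zero _ (by rw [mem_Icc] at hi; omega) (by omega)

theorem lt_zpow_mul (hF : IsGenFibonacci a k F) (ha : 0 < a) (hγ : 0 < γ)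
    (hγrec : ∀ n : ℤ, γ ^ n = a * γ ^ (n - 1) + ∑ i ∈ Icc 2 k, γ ^ (n - (i : ℤ)))
    {C : ℝ} (hC : 1 < C) (n : ℤ) (hn : 1 ≤ n) : F n < γ ^ (n - 1) * C := by
  induction n using Int.strongRec (m := 1) with
  | lt n hlt => omega
  | ge n _ ih =>
    rcases hn.eq_or_lt with rfl | hn2
    · simpa [hF.eq_one] using hC
    have hterm : ∀ i ∈ Icc 2 k, F (n - i) ≤ γ ^ (n - 1 - i) * C := by
      intro i hi
      by_cases hni : n ≤ i
      · rw [hF.eq_zero_of_le hn2 hi hni]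
        positivity
      · rw [sub_right_comm]
        exact (ih (n - i) (by rw [mem_Icc] at hi; omega) (by omega)).le
    calc F n = a * F (n - 1) + ∑ i ∈ Icc 2 k, F (n - i) := hF.step n hn2
      _ < a * (γ ^ (n - 1 - 1) * C) + ∑ i ∈ Icc 2 k, γ ^ (n - 1 - i) * C :=
        add_lt_add_of_lt_of_le (mul_lt_mul_of_pos_left (ih (n - 1) (by omega) (by omega)) ha)
          (sum_le_sum hterm)
      _ = γ ^ (n - 1) * C := by rw [hγrec (n - 1), ← sum_mul]; ring

theorem zpow_mul_add_lt (hF : IsGenFibonacci a k F) (ha : 2 < a) (hγ : a < γ)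
    (hγrec : ∀ n : ℤ, γ ^ n = a * γ ^ (n - 1) + ∑ i ∈ Icc 2 k, γ ^ (n - (i : ℤ)))
    (n : ℤ) (hn : 1 ≤ n) : γ ^ (n - 1) * ((a - 1) / a) + 1 / (a * (a - 1)) < F n := by
  have ha1 : 0 < a - 1 := by linarith
  set b := (a - 1) / a
  set c := 1 / (a * (a - 1))
  have hb : 0 < b := by positivity
  induction n using Int.strongRec (m := 1) with
  | lt n hlt => omega
  | ge n _ ih =>
    rcases hn.eq_or_lt with rfl | hn2
    · rw [hF.eq_one, sub_self, zpow_zero, one_mul, div_add_div _ _ (by positivity) (by positivity),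
        div_lt_one (by positivity)]
      nlinarith
    set T := ∑ i ∈ Icc 2 k with n ≤ ((i : ℕ) : ℤ), γ ^ (n - 1 - i)
    have hterm : ∀ i ∈ Icc 2 k,
        γ ^ (n - 1 - i) * b - (if n ≤ i then γ ^ (n - 1 - i) else 0) * b ≤ F (n - i) := by
      intro i hi
      by_cases hni : n ≤ i
      · rw [if_pos hni, sub_self, hF.eq_zero_of_le hn2 hi hni]
      · rw [if_neg hni, zero_mul, sub_zero, sub_right_comm]
        have := ih (n - i) (by rw [mem_Icc] at hi; omega) (by omega)
        have : 0 < c := by positivity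
        linarith
    have hsum : (∑ i ∈ Icc 2 k, γ ^ (n - 1 - i)) * b - T * b ≤ ∑ i ∈ Icc 2 k, F (n - i) := by
      simp only [T]
      rw [sum_filter, sum_mul, sum_mul, ← sum_sub_distrib]
      exact sum_le_sum hterm
    have hT : T * b ≤ 1 / a := by
      calc T * b ≤ 1 / (γ - 1) * b :=
            mul_le_mul_of_nonneg_right
              (sum_filter_zpow_sub_le_one_div_sub_one (by linarith) n _) hb.le
        _ ≤ 1 / (a - 1) * b := by gcongr
        _ = 1 / a := by simp only [b]; field_simp
    have hc : a * c = c + 1 / a := by simp only [c]; field_simp; ring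
    have hprev := mul_lt_mul_of_pos_left (ih (n - 1) (by omega) (by omega)) (by positivity : 0 < a)
    rw [hF.step n hn2, hγrec (n - 1)]
    linarith

end IsGenFibonacci

theorem qk_fib_exponential_growth_general
    (q : ℤ) (k : ℕ) (hq : 3 ≤ q) (hk : 2 ≤ k)
    (F : ℤ → ℝ)
    (hF0 : ∀ n : ℤ, 2 - (k : ℤ) ≤ n → n ≤ 0 → F n = 0)
    (hF1 : F 1 = 1)
    (hFrec : ∀ n : ℤ, 2 ≤ n →
      F n = (q : ℝ) * F (n - 1) + ∑ i ∈ Finset.Icc 2 k, F (n - (i : ℤ)))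
    (γ : ℝ)
    (hγ_lb : (q : ℝ) < γ)
    (hγ_root : γ ^ k - (q : ℝ) * γ ^ (k - 1) - ∑ i ∈ Finset.range (k - 1), γ ^ i = 0) :
    ∀ n : ℤ, 1 ≤ n →
      γ ^ (n - 2) < γ ^ (n - 1) * (((q : ℝ) - 1) / (q : ℝ)) ∧
      γ ^ (n - 1) * (((q : ℝ) - 1) / (q : ℝ)) < F n ∧
      F n < γ ^ (n - 1) * (((q : ℝ) + 2) / (q : ℝ)) ∧
      γ ^ (n - 1) * (((q : ℝ) + 2) / (q : ℝ)) < γ ^ n := by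
  intro n hn
  have hq3 : (3 : ℝ) ≤ q := by exact_mod_cast hq
  have hγ0 : 0 < γ := by linarith
  have hF : IsGenFibonacci q k F := ⟨hF0, hF1, hFrec⟩
  have hγrec := zpow_eq_mul_zpow_sub_one_add_sum (by omega) hγ0.ne' hγ_root
  refine ⟨?_, ?_, hF.lt_zpow_mul (by positivity) hγ0 hγrec ?_ n hn, ?_⟩
  · rw [show n - 2 = n - 1 - 1 by ring, zpow_sub_one₀ hγ0.ne']
    gcongr
    rw [lt_div_iff₀ (by positivity), inv_mul_lt_iff₀ hγ0]
    nlinarith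
  · have := hF.zpow_mul_add_lt (by linarith) hγ_lb hγrec n hn
    have : (0 : ℝ) < 1 / (q * (q - 1)) := by
      have : (0 : ℝ) < q - 1 := by linarith
      positivity
    linarith
  · rw [lt_div_iff₀ (by positivity)]
    linarith
  · have hu : ((q : ℝ) + 2) / q < γ := by
      rw [div_lt_iff₀ (by positivity)]
      nlinarith
    calc γ ^ (n - 1) * (((q : ℝ) + 2) / q) < γ ^ (n - 1) * γ := by gcongr
      _ = γ ^ n := by rw [← zpow_add_one₀ hγ0.ne', sub_add_cancel]

/-- For integers `q ≥ 3` and `k ≥ 2`, with `γ` the dominant root of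
`Φ_{q,k}` (its unique real root in `(q, q+1)`), for all integers `n ≥ 1` one has
`γ^{n−2} < γ^{n−1}·((q−1)/q) < F n < γ^{n−1}·((q+2)/q) < γ^n`. -/
theorem qk_fib_exponential_growth
    (q : ℤ) (k : ℕ) (hq : 3 ≤ q) (hk : 2 ≤ k)
    (F : ℤ → ℝ)
    (hF0 : ∀ n : ℤ, 2 - (k : ℤ) ≤ n → n ≤ 0 → F n = 0)
    (hF1 : F 1 = 1)
    (hFrec : ∀ n : ℤ, 2 ≤ n →
      F n = (q : ℝ) * F (n - 1) + ∑ i ∈ Finset.Icc 2 k, F (n - (i : ℤ)))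
    (γ : ℝ)
    (hγ_lb : (q : ℝ) < γ) (hγ_ub : γ < (q : ℝ) + 1)
    (hγ_root : γ ^ k - (q : ℝ) * γ ^ (k - 1) - ∑ i ∈ Finset.range (k - 1), γ ^ i = 0) :
    ∀ n : ℤ, 1 ≤ n →
      γ ^ (n - 2) < γ ^ (n - 1) * (((q : ℝ) - 1) / (q : ℝ)) ∧
      γ ^ (n - 1) * (((q : ℝ) - 1) / (q : ℝ)) < F n ∧
      F n < γ ^ (n - 1) * (((q : ℝ) + 2) / (q : ℝ)) ∧
      γ ^ (n - 1) * (((q : ℝ) + 2) / (q : ℝ)) < γ ^ n :=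
  qk_fib_exponential_growth_general q k hq hk F hF0 hF1 hFrec γ hγ_lb hγ_root
end
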